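/- arXiv:1302.3257 — 2 statements merged into one kernel-verified Lean document; each statement's English description precedes it below -/
import Mathlib

section
/- Every semi-C-reducible twisted product Finsler metric is C2-like: if the Cartan tensor of a twisted product Finsler metric F (with n := n₁ + n₂) satisfies C̃_{abc} = (p/(n+1))( Ĩ_a h̃_{bc} + Ĩ_b h̃_{ac} + Ĩ_c h̃_{ab} ) + (q/C̃²) Ĩ_a Ĩ_b Ĩ_c for scalar functions p, q with p + q = 1, where C̃² := Ĩ^a Ĩ_a ≠ 0, then p = 0, i.e. C̃_{abc} = (1/C̃²) Ĩ_a Ĩ_b Ĩ_c. -/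
open scoped BigOperators

noncomputable section

/-- Partial derivative in the first (base) variable in coordinate direction `i`. -/
def pdx {ι κ : Type*} [Fintype ι] [DecidableEq ι]
    (i : ι) (φ : (ι → ℝ) → (κ → ℝ) → ℝ) (x : ι → ℝ) (y : κ → ℝ) : ℝ :=
  fderiv ℝ (fun x' => φ x' y) x (Pi.single i 1)

/-- Partial derivative in the second (fiber) variable in coordinate direction `j`. -/
def pdy {ι κ : Type*} [Fintype κ] [DecidableEq κ]
    (j : κ) (φ : (ι → ℝ) → (κ → ℝ) → ℝ) (x : ι → ℝ) (y : κ → ℝ) : ℝ :=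
  fderiv ℝ (fun y' => φ x y') y (Pi.single j 1)

variable {ι : Type*} [Fintype ι] [DecidableEq ι]

/-- Fundamental tensor `g_{ij}(x,y) = (1/2) ∂²F²/∂y^i∂y^j`. -/
def fTensor (F : (ι → ℝ) → (ι → ℝ) → ℝ) (i j : ι) (x y : ι → ℝ) : ℝ :=
  (1/2) * pdy i (pdy j (fun a b => (F a b)^2)) x y

/-- Fundamental tensor as a matrix. -/
def gMat (F : (ι → ℝ) → (ι → ℝ) → ℝ) (x y : ι → ℝ) : Matrix ι ι ℝ :=
  Matrix.of fun i j => fTensor F i j x y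

/-- Inverse fundamental tensor `g^{ij}`. -/
def gInv (F : (ι → ℝ) → (ι → ℝ) → ℝ) (x y : ι → ℝ) : Matrix ι ι ℝ :=
  (gMat F x y)⁻¹

/-- `F` is a Finsler metric on the open set `U ⊆ ℝ^ι`. -/
structure IsFinslerMetric (U : Set (ι → ℝ)) (F : (ι → ℝ) → (ι → ℝ) → ℝ) : Prop where
  isOpen : IsOpen U
  nonneg : ∀ x ∈ U, ∀ y : ι → ℝ, 0 ≤ F x y
  smooth : ContDiffOn ℝ (⊤ : ℕ∞) (fun p : (ι → ℝ) × (ι → ℝ) => F p.1 p.2) (U ×ˢ {y : ι → ℝ | y ≠ 0})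
  homog : ∀ x ∈ U, ∀ (y : ι → ℝ) (t : ℝ), 0 < t → F x (t • y) = t * F x y
  posdef : ∀ x ∈ U, ∀ y : ι → ℝ, y ≠ 0 → ∀ w : ι → ℝ, w ≠ 0 →
    0 < ∑ i, ∑ j, fTensor F i j x y * w i * w j

/-- Spray coefficients `G^i = (1/4) g^{il}((∂²F²/∂x^k∂y^l) y^k − ∂F²/∂x^l)`. -/
def sprayCoef (F : (ι → ℝ) → (ι → ℝ) → ℝ) (i : ι) (x y : ι → ℝ) : ℝ :=
  (1/4) * ∑ l, gInv F x y i l *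
    ((∑ k, y k * pdx k (pdy l (fun a b => (F a b)^2)) x y)
      - pdx l (fun a b => (F a b)^2) x y)

/-- Nonlinear connection coefficients `G^a_b = ∂G^a/∂y^b`. -/
def nonlinConn (F : (ι → ℝ) → (ι → ℝ) → ℝ) (a b : ι) (x y : ι → ℝ) : ℝ :=
  pdy b (sprayCoef F a) x y

/-- Cartan tensor `C_{ijk} = (1/2) ∂g_{ij}/∂y^k`. -/
def cartan (F : (ι → ℝ) → (ι → ℝ) → ℝ) (i j k : ι) (x y : ι → ℝ) : ℝ :=
  (1/2) * pdy k (fTensor F i j) x y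

/-- Cartan tensor with first index raised: `C^c_{ab} = g^{ce} C_{abe}`. -/
def cartanUp1 (F : (ι → ℝ) → (ι → ℝ) → ℝ) (c a b : ι) (x y : ι → ℝ) : ℝ :=
  ∑ e, gInv F x y c e * cartan F a b e x y

/-- Cartan tensor with two indices raised: `C^{ih}_j = g^{ir} g^{hs} C_{rsj}`. -/
def cartanUp2 (F : (ι → ℝ) → (ι → ℝ) → ℝ) (i h j : ι) (x y : ι → ℝ) : ℝ :=
  ∑ r, ∑ s, gInv F x y i r * gInv F x y h s * cartan F r s j x y

/-- Mean Cartan torsion `I_a = g^{bc} C_{abc}`. -/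
def meanCartan (F : (ι → ℝ) → (ι → ℝ) → ℝ) (a : ι) (x y : ι → ℝ) : ℝ :=
  ∑ b, ∑ c, gInv F x y b c * cartan F a b c x y

/-- Raised mean Cartan torsion `I^h = g^{hj} I_j`. -/
def meanCartanUp (F : (ι → ℝ) → (ι → ℝ) → ℝ) (h : ι) (x y : ι → ℝ) : ℝ :=
  ∑ j, gInv F x y h j * meanCartan F j x y

/-- `‖I‖² = I^a I_a`. -/
def meanCartanNormSq (F : (ι → ℝ) → (ι → ℝ) → ℝ) (x y : ι → ℝ) : ℝ :=
  ∑ a, ∑ b, gInv F x y a b * meanCartan F a x y * meanCartan F b x y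

/-- Lowered fiber variable `y_a = g_{ab} y^b`. -/
def lowerY (F : (ι → ℝ) → (ι → ℝ) → ℝ) (a : ι) (x y : ι → ℝ) : ℝ :=
  ∑ b, fTensor F a b x y * y b

/-- Angular metric `h_{ab} = g_{ab} − F^{-2} y_a y_b`. -/
def angular (F : (ι → ℝ) → (ι → ℝ) → ℝ) (a b : ι) (x y : ι → ℝ) : ℝ :=
  fTensor F a b x y - ((F x y)^2)⁻¹ * lowerY F a x y * lowerY F b x y

/-- Matsumoto torsion (with `n` the dimension of the underlying manifold). -/
def matsumoto (n : ℕ) (F : (ι → ℝ) → (ι → ℝ) → ℝ) (a b c : ι) (x y : ι → ℝ) : ℝ :=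
  cartan F a b c x y - (1/((n : ℝ)+1)) *
    (meanCartan F a x y * angular F b c x y + meanCartan F b x y * angular F a c x y
      + meanCartan F c x y * angular F a b x y)

/-- Horizontal derivative `δφ/δx^b = ∂φ/∂x^b − G^e_b ∂φ/∂y^e`. -/
def hderiv (F : (ι → ℝ) → (ι → ℝ) → ℝ) (b : ι) (φ : (ι → ℝ) → (ι → ℝ) → ℝ)
    (x y : ι → ℝ) : ℝ :=
  pdx b φ x y - ∑ e, nonlinConn F e b x y * pdy e φ x y

/-- Berwald-type connection coefficients
`F^c_{ab} = (1/2) g^{ce}(δg_{ea}/δx^b + δg_{eb}/δx^a − δg_{ab}/δx^e)`. -/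
def connCoef (F : (ι → ℝ) → (ι → ℝ) → ℝ) (c a b : ι) (x y : ι → ℝ) : ℝ :=
  (1/2) * ∑ e, gInv F x y c e *
    (hderiv F b (fTensor F e a) x y + hderiv F a (fTensor F e b) x y
      - hderiv F e (fTensor F a b) x y)

/-- Riemann curvature of the Berwald connection:
`R^a_{b cd} = δF^a_{bc}/δx^d − δF^a_{bd}/δx^c + F^a_{de} F^e_{bc} − F^a_{ce} F^e_{bd}`. -/
def riemCurv (F : (ι → ℝ) → (ι → ℝ) → ℝ) (a b c d : ι) (x y : ι → ℝ) : ℝ :=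
  hderiv F d (connCoef F a b c) x y - hderiv F c (connCoef F a b d) x y
    + (∑ e, connCoef F a d e x y * connCoef F e b c x y)
    - (∑ e, connCoef F a c e x y * connCoef F e b d x y)

/-- Berwald curvature `B^d_{abc} = ∂³G^d/∂y^a∂y^b∂y^c`. -/
def berwald (F : (ι → ℝ) → (ι → ℝ) → ℝ) (d a b c : ι) (x y : ι → ℝ) : ℝ :=
  pdy a (pdy b (pdy c (sprayCoef F d))) x y

/-- Mean Berwald curvature `E_{ab} = (1/2) B^c_{abc}`. -/
def meanBerwald (F : (ι → ℝ) → (ι → ℝ) → ℝ) (a b : ι) (x y : ι → ℝ) : ℝ :=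
  (1/2) * ∑ c, berwald F c a b c x y

/-- The twisted product metric `F(x,u,y,v) = sqrt(F₁(x,y)² + f(x,u)² F₂(u,v)²)`
on the product, with indices `Fin n₁ ⊕ Fin n₂`. -/
def twisted {n₁ n₂ : ℕ} (F₁ : (Fin n₁ → ℝ) → (Fin n₁ → ℝ) → ℝ)
    (F₂ : (Fin n₂ → ℝ) → (Fin n₂ → ℝ) → ℝ)
    (f : (Fin n₁ → ℝ) → (Fin n₂ → ℝ) → ℝ) :
    ((Fin n₁ ⊕ Fin n₂) → ℝ) → ((Fin n₁ ⊕ Fin n₂) → ℝ) → ℝ :=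
  fun X Y => Real.sqrt ((F₁ (X ∘ Sum.inl) (Y ∘ Sum.inl))^2
    + (f (X ∘ Sum.inl) (X ∘ Sum.inr))^2 * (F₂ (X ∘ Sum.inr) (Y ∘ Sum.inr))^2)

/-- Angular metric with first index raised: `h^d_a = g^{de} h_{ea}`. -/
def angularUp (F : (ι → ℝ) → (ι → ℝ) → ℝ) (d a : ι) (x y : ι → ℝ) : ℝ :=
  ∑ e, gInv F x y d e * angular F e a x y

end


noncomputable section Euler

open Filter Topology

variable {ι : Type*} [Fintype ι] [DecidableEq ι]

lemma sum_smul_single (f : ι → ℝ) : ∑ i, f i • (Pi.single i (1:ℝ) : ι → ℝ) = f := by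
  have := Finset.univ_sum_single f
  rw [← this]
  congr 1; funext i
  rw [← Pi.single_smul']; simp

variable {U : Set (ι → ℝ)} {F : (ι → ℝ) → (ι → ℝ) → ℝ}

/-- squared metric in the fiber, sliced at `x` -/
def Asq (F : (ι → ℝ) → (ι → ℝ) → ℝ) (x : ι → ℝ) : (ι → ℝ) → ℝ := fun y => (F x y)^2

/-- first fiber derivative of the squared metric -/
def psiF (F : (ι → ℝ) → (ι → ℝ) → ℝ) (x : ι → ℝ) (j : ι) : (ι → ℝ) → ℝ :=
  fun y => fderiv ℝ (Asq F x) y (Pi.single j 1)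

lemma pdy_sq_eq_psiF (x : ι → ℝ) (j : ι) :
    (fun y => pdy j (fun a b => (F a b)^2) x y) = psiF F x j := rfl

lemma Asq_contDiffAt (hF : IsFinslerMetric U F) {x : ι → ℝ} (hx : x ∈ U)
    {y : ι → ℝ} (hy : y ≠ 0) : ContDiffAt ℝ (⊤ : ℕ∞) (Asq F x) y := by
  have hopen : IsOpen (U ×ˢ {y : ι → ℝ | y ≠ 0}) :=
    hF.isOpen.prod (isOpen_compl_singleton (x := (0 : ι → ℝ)))
  have h1 : ContDiffAt ℝ (⊤ : ℕ∞) (fun p : (ι → ℝ) × (ι → ℝ) => F p.1 p.2) (x, y) :=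
    hF.smooth.contDiffAt (hopen.mem_nhds ⟨hx, hy⟩)
  have h2 : ContDiffAt ℝ (⊤ : ℕ∞) (fun y' : ι → ℝ => F x y') y :=
    h1.comp y (contDiffAt_const.prodMk contDiffAt_id)
  exact h2.pow 2

lemma Asq_homog (hF : IsFinslerMetric U F) {x : ι → ℝ} (hx : x ∈ U)
    (y : ι → ℝ) {t : ℝ} (ht : 0 < t) : Asq F x (t • y) = t^2 * Asq F x y := by
  unfold Asq; rw [hF.homog x hx y t ht]; ring

lemma psiF_contDiffAt (hF : IsFinslerMetric U F) {x : ι → ℝ} (hx : x ∈ U)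
    {y : ι → ℝ} (hy : y ≠ 0) (j : ι) : ContDiffAt ℝ (⊤ : ℕ∞) (psiF F x j) y :=
  ((Asq_contDiffAt hF hx hy).fderiv_right (m := (⊤ : ℕ∞)) (by simp)).clm_apply contDiffAt_const

lemma psiF_homog (hF : IsFinslerMetric U F) {x : ι → ℝ} (hx : x ∈ U)
    {y : ι → ℝ} (hy : y ≠ 0) {t : ℝ} (ht : 0 < t) (j : ι) :
    psiF F x j (t • y) = t * psiF F x j y := by
  set S : (ι → ℝ) →L[ℝ] (ι → ℝ) := t • ContinuousLinearMap.id ℝ (ι → ℝ) with hS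
  have hty : t • y ≠ 0 := smul_ne_zero ht.ne' hy
  have hdty : DifferentiableAt ℝ (Asq F x) (t • y) :=
    (Asq_contDiffAt hF hx hty).differentiableAt (by simp)
  have hdy : DifferentiableAt ℝ (Asq F x) y :=
    (Asq_contDiffAt hF hx hy).differentiableAt (by simp)
  have hfun : (fun w => Asq F x (t • w)) = (Asq F x) ∘ S := by
    funext w; simp [hS, Function.comp]
  have hfun2 : (fun w => Asq F x (t • w)) = fun w => t^2 * Asq F x w :=
    funext fun w => Asq_homog hF hx w ht
  have h1 : fderiv ℝ (fun w => Asq F x (t • w)) y (Pi.single j 1)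
      = t * psiF F x j (t • y) := by
    rw [hfun, fderiv_comp y (by simpa [hS] using hdty) S.differentiableAt, S.fderiv]
    have : S (Pi.single j 1) = t • (Pi.single j (1:ℝ) : ι → ℝ) := by simp [hS]
    simp only [ContinuousLinearMap.coe_comp', Function.comp_apply, this, map_smul]
    simp [psiF, hS, smul_eq_mul]
  have h2 : fderiv ℝ (fun w => Asq F x (t • w)) y (Pi.single j 1)
      = t^2 * psiF F x j y := by
    rw [hfun2, fderiv_const_mul hdy]
    simp [psiF, smul_eq_mul]
  have := h1.symm.trans h2
  have ht' : t ≠ 0 := ht.ne'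
  field_simp at this
  nlinarith [this]

lemma euler_Asq (hF : IsFinslerMetric U F) {x : ι → ℝ} (hx : x ∈ U)
    {y : ι → ℝ} (hy : y ≠ 0) : fderiv ℝ (Asq F x) y y = 2 * Asq F x y := by
  have hdy : DifferentiableAt ℝ (Asq F x) y :=
    (Asq_contDiffAt hF hx hy).differentiableAt (by simp)
  have hc : HasDerivAt (fun t : ℝ => t • y) y 1 := by
    simpa using (hasDerivAt_id (1:ℝ)).smul_const y
  have hy1 : HasFDerivAt (Asq F x) (fderiv ℝ (Asq F x) y) ((1:ℝ) • y) := by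
    rw [one_smul]; exact hdy.hasFDerivAt
  have h1 : HasDerivAt (fun t : ℝ => Asq F x (t • y)) (fderiv ℝ (Asq F x) y y) 1 :=
    hy1.comp_hasDerivAt (l := Asq F x) 1 hc
  have h2 : HasDerivAt (fun t : ℝ => t^2 * Asq F x y) (2 * Asq F x y) 1 := by
    have := (hasDerivAt_pow 2 (1:ℝ)).mul_const (Asq F x y)
    simpa using this
  have heq : (fun t : ℝ => t^2 * Asq F x y) =ᶠ[𝓝 (1:ℝ)] fun t => Asq F x (t • y) := by
    filter_upwards [eventually_gt_nhds (by norm_num : (0:ℝ) < 1)] with t ht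
    rw [Asq_homog hF hx y ht]
  have h3 : HasDerivAt (fun t : ℝ => Asq F x (t • y)) (2 * Asq F x y) 1 :=
    h2.congr_of_eventuallyEq heq.symm
  exact h1.unique h3

lemma euler_psiF (hF : IsFinslerMetric U F) {x : ι → ℝ} (hx : x ∈ U)
    {y : ι → ℝ} (hy : y ≠ 0) (j : ι) : fderiv ℝ (psiF F x j) y y = psiF F x j y := by
  have hdy : DifferentiableAt ℝ (psiF F x j) y :=
    (psiF_contDiffAt hF hx hy j).differentiableAt (by simp)
  have hc : HasDerivAt (fun t : ℝ => t • y) y 1 := by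
    simpa using (hasDerivAt_id (1:ℝ)).smul_const y
  have hy1 : HasFDerivAt (psiF F x j) (fderiv ℝ (psiF F x j) y) ((1:ℝ) • y) := by
    rw [one_smul]; exact hdy.hasFDerivAt
  have h1 : HasDerivAt (fun t : ℝ => psiF F x j (t • y)) (fderiv ℝ (psiF F x j) y y) 1 :=
    hy1.comp_hasDerivAt (l := psiF F x j) 1 hc
  have h2 : HasDerivAt (fun t : ℝ => t * psiF F x j y) (psiF F x j y) 1 := by
    simpa using (hasDerivAt_id (1:ℝ)).mul_const (psiF F x j y)
  have heq : (fun t : ℝ => t * psiF F x j y) =ᶠ[𝓝 (1:ℝ)] fun t => psiF F x j (t • y) := by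
    filter_upwards [eventually_gt_nhds (by norm_num : (0:ℝ) < 1)] with t ht
    rw [psiF_homog hF hx hy ht j]
  have h3 : HasDerivAt (fun t : ℝ => psiF F x j (t • y)) (psiF F x j y) 1 :=
    h2.congr_of_eventuallyEq heq.symm
  exact h1.unique h3

lemma fTensor_eq_fderiv_psiF (x y : ι → ℝ) (i j : ι) :
    fTensor F i j x y = (1/2) * fderiv ℝ (psiF F x j) y (Pi.single i 1) := rfl

lemma rowsum (hF : IsFinslerMetric U F) {x : ι → ℝ} (hx : x ∈ U)
    {y : ι → ℝ} (hy : y ≠ 0) (j : ι) :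
    ∑ i, y i * fTensor F i j x y = (1/2) * psiF F x j y := by
  have hkey : ∑ i, y i * fderiv ℝ (psiF F x j) y (Pi.single i 1)
      = fderiv ℝ (psiF F x j) y y := by
    calc ∑ i, y i * fderiv ℝ (psiF F x j) y (Pi.single i 1)
        = ∑ i, fderiv ℝ (psiF F x j) y (y i • (Pi.single i (1:ℝ) : ι → ℝ)) := by
          simp [map_smul, smul_eq_mul]
      _ = fderiv ℝ (psiF F x j) y (∑ i, y i • (Pi.single i (1:ℝ) : ι → ℝ)) :=
          (map_sum (fderiv ℝ (psiF F x j) y) _ _).symm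
      _ = fderiv ℝ (psiF F x j) y y := by rw [sum_smul_single]
  calc ∑ i, y i * fTensor F i j x y
      = (1/2) * ∑ i, y i * fderiv ℝ (psiF F x j) y (Pi.single i 1) := by
        rw [Finset.mul_sum]; congr 1; funext i
        rw [fTensor_eq_fderiv_psiF]; ring
    _ = (1/2) * fderiv ℝ (psiF F x j) y y := by rw [hkey]
    _ = (1/2) * psiF F x j y := by rw [euler_psiF hF hx hy j]

lemma eulerQ (hF : IsFinslerMetric U F) {x : ι → ℝ} (hx : x ∈ U)
    {y : ι → ℝ} (hy : y ≠ 0) :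
    ∑ i, ∑ j, fTensor F i j x y * y i * y j = (F x y)^2 := by
  have hkey : ∑ j, y j * psiF F x j y = fderiv ℝ (Asq F x) y y := by
    calc ∑ j, y j * psiF F x j y
        = ∑ j, fderiv ℝ (Asq F x) y (y j • (Pi.single j (1:ℝ) : ι → ℝ)) := by
          simp [psiF, map_smul, smul_eq_mul]
      _ = fderiv ℝ (Asq F x) y (∑ j, y j • (Pi.single j (1:ℝ) : ι → ℝ)) :=
          (map_sum (fderiv ℝ (Asq F x) y) _ _).symm
      _ = fderiv ℝ (Asq F x) y y := by rw [sum_smul_single]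
  calc ∑ i, ∑ j, fTensor F i j x y * y i * y j
      = ∑ j, ∑ i, fTensor F i j x y * y i * y j := Finset.sum_comm
    _ = ∑ j, (∑ i, y i * fTensor F i j x y) * y j := by
        congr 1; funext j; rw [Finset.sum_mul]; congr 1; funext i; ring
    _ = ∑ j, ((1/2) * psiF F x j y) * y j := by
        congr 1; funext j; rw [rowsum hF hx hy j]
    _ = (1/2) * ∑ j, y j * psiF F x j y := by
        rw [Finset.mul_sum]; congr 1; funext j; ring
    _ = (1/2) * fderiv ℝ (Asq F x) y y := by rw [hkey]
    _ = (F x y)^2 := by rw [euler_Asq hF hx hy]; unfold Asq; ring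

lemma fTensor_contDiffAt (hF : IsFinslerMetric U F) {x : ι → ℝ} (hx : x ∈ U)
    {y : ι → ℝ} (hy : y ≠ 0) (s t : ι) :
    ContDiffAt ℝ (⊤ : ℕ∞) (fun z => fTensor F s t x z) y := by
  have h1 : ContDiffAt ℝ (⊤ : ℕ∞) (fun z => fderiv ℝ (psiF F x t) z (Pi.single s 1)) y :=
    ((psiF_contDiffAt hF hx hy t).fderiv_right (m := (⊤ : ℕ∞)) (by simp)).clm_apply contDiffAt_const
  have h2 : (fun z => fTensor F s t x z)
      = fun z => (1/2) * fderiv ℝ (psiF F x t) z (Pi.single s 1) := rfl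
  rw [h2]
  exact contDiffAt_const.mul h1

lemma cartan_eq_fderiv (x y : ι → ℝ) (s t w : ι) :
    cartan F s t w x y = (1/2) * fderiv ℝ (fun z => fTensor F s t x z) y (Pi.single w 1) := rfl

lemma eulerC (hF : IsFinslerMetric U F) {x : ι → ℝ} (hx : x ∈ U)
    {y : ι → ℝ} (hy : y ≠ 0) (t w : ι) :
    ∑ s, y s * cartan F s t w x y = 0 := by
  have hopen : IsOpen {z : ι → ℝ | z ≠ 0} := isOpen_compl_singleton
  have heq : (fun z => ∑ s, z s * fTensor F s t x z)
      =ᶠ[nhds y] fun z => (1/2) * psiF F x t z := by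
    filter_upwards [hopen.mem_nhds hy] with z hz
    exact rowsum hF hx hz t
  have hfe := heq.fderiv_eq (𝕜 := ℝ)
  have hdiffT : ∀ s : ι, DifferentiableAt ℝ (fun z => fTensor F s t x z) y := fun s =>
    (fTensor_contDiffAt hF hx hy s t).differentiableAt (by simp)
  have hdpsi : DifferentiableAt ℝ (psiF F x t) y :=
    (psiF_contDiffAt hF hx hy t).differentiableAt (by simp)
  have hproj : ∀ s : ι, DifferentiableAt ℝ (fun z : ι → ℝ => z s) y := by
    intro s
    have := (ContinuousLinearMap.proj (R := ℝ) (φ := fun _ : ι => ℝ) s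
      : ((ι → ℝ) →L[ℝ] ℝ)).differentiableAt (x := y)
    exact this
  have hdiffmul : ∀ s : ι, DifferentiableAt ℝ (fun z : ι → ℝ => z s * fTensor F s t x z) y :=
    fun s => (hproj s).mul (hdiffT s)
  have hL : fderiv ℝ (fun z => ∑ s, z s * fTensor F s t x z) y (Pi.single w 1)
      = ∑ s, (y s • fderiv ℝ (fun z => fTensor F s t x z) y
              + fTensor F s t x y • fderiv ℝ (fun z : ι → ℝ => z s) y) (Pi.single w 1) := by
    rw [fderiv_fun_sum (fun s _ => hdiffmul s)]
    rw [ContinuousLinearMap.sum_apply]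
    congr 1; funext s
    rw [fderiv_fun_mul (hproj s) (hdiffT s)]
  have hprojw : ∀ s : ι, fderiv ℝ (fun z : ι → ℝ => z s) y (Pi.single w 1)
      = (Pi.single w (1:ℝ) : ι → ℝ) s := by
    intro s
    have : (fun z : ι → ℝ => z s)
        = (ContinuousLinearMap.proj (R := ℝ) (φ := fun _ : ι => ℝ) s : ((ι → ℝ) →L[ℝ] ℝ)) := rfl
    rw [this, ContinuousLinearMap.fderiv]
    rfl
  have hR : fderiv ℝ (fun z => (1/2) * psiF F x t z) y (Pi.single w 1)
      = fTensor F w t x y := by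
    rw [fderiv_const_mul hdpsi]
    rw [fTensor_eq_fderiv_psiF]
    simp
  have hLval : ∑ s, (y s • fderiv ℝ (fun z => fTensor F s t x z) y
              + fTensor F s t x y • fderiv ℝ (fun z : ι → ℝ => z s) y) (Pi.single w 1)
      = (∑ s, y s * (2 * cartan F s t w x y)) + fTensor F w t x y := by
    have : ∀ s : ι, (y s • fderiv ℝ (fun z => fTensor F s t x z) y
              + fTensor F s t x y • fderiv ℝ (fun z : ι → ℝ => z s) y) (Pi.single w 1)
        = y s * (2 * cartan F s t w x y)
          + fTensor F s t x y * (Pi.single w (1:ℝ) : ι → ℝ) s := by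
      intro s
      rw [ContinuousLinearMap.add_apply, ContinuousLinearMap.smul_apply,
        ContinuousLinearMap.smul_apply, hprojw s]
      have hc : fderiv ℝ (fun z => fTensor F s t x z) y (Pi.single w 1)
          = 2 * cartan F s t w x y := by
        rw [cartan_eq_fderiv]; ring
      rw [hc]; simp [smul_eq_mul]
    rw [Finset.sum_congr rfl (fun s _ => this s), Finset.sum_add_distrib]
    congr 1
    have : ∑ s, fTensor F s t x y * (Pi.single w (1:ℝ) : ι → ℝ) s
        = fTensor F w t x y := by
      rw [Finset.sum_eq_single w]
      · simp
      · intro b _ hb; simp [Pi.single_apply, hb]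
      · intro h; exact absurd (Finset.mem_univ w) h
    rw [this]
  have hmain : (∑ s, y s * (2 * cartan F s t w x y)) + fTensor F w t x y
      = fTensor F w t x y := by
    rw [← hLval, ← hL, hfe, hR]
  have h0 : ∑ s, y s * (2 * cartan F s t w x y) = 0 := by linarith
  have : ∑ s, y s * cartan F s t w x y = (1/2) * ∑ s, y s * (2 * cartan F s t w x y) := by
    rw [Finset.mul_sum]; congr 1; funext s; ring
  rw [this, h0]; ring

lemma Q_pos (hF : IsFinslerMetric U F) {x : ι → ℝ} (hx : x ∈ U)
    {y : ι → ℝ} (hy : y ≠ 0) : 0 < (F x y)^2 := by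
  rw [← eulerQ hF hx hy]
  exact hF.posdef x hx y hy y hy

lemma gMat_det_ne_zero (hF : IsFinslerMetric U F) {x : ι → ℝ} (hx : x ∈ U)
    {y : ι → ℝ} (hy : y ≠ 0) : (gMat F x y).det ≠ 0 := by
  intro hdet
  obtain ⟨w, hw, hmul⟩ := (Matrix.exists_mulVec_eq_zero_iff).2 hdet
  have hpos := hF.posdef x hx y hy w hw
  have : ∑ i, ∑ j, fTensor F i j x y * w i * w j
      = ∑ i, w i * (gMat F x y).mulVec w i := by
    congr 1; funext i
    rw [Matrix.mulVec, dotProduct, Finset.mul_sum]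
    congr 1; funext j
    simp only [gMat, Matrix.of_apply]; ring
  rw [this, hmul] at hpos
  simp at hpos

lemma lY_contract (hF : IsFinslerMetric U F) {x : ι → ℝ} (hx : x ∈ U)
    {y : ι → ℝ} (hy : y ≠ 0) :
    ∑ i, y i * lowerY F i x y = (F x y)^2 := by
  calc ∑ i, y i * lowerY F i x y
      = ∑ i, ∑ j, fTensor F i j x y * y i * y j := by
        congr 1; funext i
        unfold lowerY
        rw [Finset.mul_sum]
        congr 1; funext j; ring
    _ = (F x y)^2 := eulerQ hF hx hy

end Euler

noncomputable section Twisted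

open Filter Topology

/-- projection onto the first block of coordinates, as a continuous linear map -/
def projL (n₁ n₂ : ℕ) : ((Fin n₁ ⊕ Fin n₂) → ℝ) →L[ℝ] (Fin n₁ → ℝ) :=
  ContinuousLinearMap.pi fun i => ContinuousLinearMap.proj (Sum.inl i)

/-- projection onto the second block of coordinates, as a continuous linear map -/
def projR (n₁ n₂ : ℕ) : ((Fin n₁ ⊕ Fin n₂) → ℝ) →L[ℝ] (Fin n₂ → ℝ) :=
  ContinuousLinearMap.pi fun i => ContinuousLinearMap.proj (Sum.inr i)

lemma projL_apply {n₁ n₂ : ℕ} (Y : (Fin n₁ ⊕ Fin n₂) → ℝ) : projL n₁ n₂ Y = Y ∘ Sum.inl := rfl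
lemma projR_apply {n₁ n₂ : ℕ} (Y : (Fin n₁ ⊕ Fin n₂) → ℝ) : projR n₁ n₂ Y = Y ∘ Sum.inr := rfl

lemma single_inl_comp_inl {n₁ n₂ : ℕ} (j : Fin n₁) :
    (Pi.single (Sum.inl j : Fin n₁ ⊕ Fin n₂) (1:ℝ)) ∘ Sum.inl = Pi.single j 1 := by
  funext i; simp [Pi.single_apply, Function.comp]

lemma single_inl_comp_inr {n₁ n₂ : ℕ} (j : Fin n₁) :
    (Pi.single (Sum.inl j : Fin n₁ ⊕ Fin n₂) (1:ℝ)) ∘ Sum.inr = 0 := by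
  funext i; simp [Pi.single_apply, Function.comp]

lemma single_inr_comp_inl {n₁ n₂ : ℕ} (j : Fin n₂) :
    (Pi.single (Sum.inr j : Fin n₁ ⊕ Fin n₂) (1:ℝ)) ∘ Sum.inl = 0 := by
  funext i; simp [Pi.single_apply, Function.comp]

lemma single_inr_comp_inr {n₁ n₂ : ℕ} (j : Fin n₂) :
    (Pi.single (Sum.inr j : Fin n₁ ⊕ Fin n₂) (1:ℝ)) ∘ Sum.inr = Pi.single j 1 := by
  funext i; simp [Pi.single_apply, Function.comp]

lemma diff_comp_inl {n₁ n₂ : ℕ} {g : (Fin n₁ → ℝ) → ℝ} {Y : (Fin n₁ ⊕ Fin n₂) → ℝ}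
    (hg : DifferentiableAt ℝ g (Y ∘ Sum.inl)) :
    DifferentiableAt ℝ (fun Y' : (Fin n₁ ⊕ Fin n₂) → ℝ => g (Y' ∘ Sum.inl)) Y :=
  hg.comp Y (projL n₁ n₂).differentiableAt

lemma diff_comp_inr {n₁ n₂ : ℕ} {g : (Fin n₂ → ℝ) → ℝ} {Y : (Fin n₁ ⊕ Fin n₂) → ℝ}
    (hg : DifferentiableAt ℝ g (Y ∘ Sum.inr)) :
    DifferentiableAt ℝ (fun Y' : (Fin n₁ ⊕ Fin n₂) → ℝ => g (Y' ∘ Sum.inr)) Y :=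
  hg.comp Y (projR n₁ n₂).differentiableAt

lemma fderiv_comp_inl {n₁ n₂ : ℕ} {g : (Fin n₁ → ℝ) → ℝ} {Y : (Fin n₁ ⊕ Fin n₂) → ℝ}
    (hg : DifferentiableAt ℝ g (Y ∘ Sum.inl)) (w : (Fin n₁ ⊕ Fin n₂) → ℝ) :
    fderiv ℝ (fun Y' : (Fin n₁ ⊕ Fin n₂) → ℝ => g (Y' ∘ Sum.inl)) Y w
      = fderiv ℝ g (Y ∘ Sum.inl) (w ∘ Sum.inl) := by
  have h1 : (fun Y' : (Fin n₁ ⊕ Fin n₂) → ℝ => g (Y' ∘ Sum.inl)) = g ∘ (projL n₁ n₂) := rfl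
  rw [h1, fderiv_comp Y hg (projL n₁ n₂).differentiableAt, (projL n₁ n₂).fderiv]
  rfl

lemma fderiv_comp_inr {n₁ n₂ : ℕ} {g : (Fin n₂ → ℝ) → ℝ} {Y : (Fin n₁ ⊕ Fin n₂) → ℝ}
    (hg : DifferentiableAt ℝ g (Y ∘ Sum.inr)) (w : (Fin n₁ ⊕ Fin n₂) → ℝ) :
    fderiv ℝ (fun Y' : (Fin n₁ ⊕ Fin n₂) → ℝ => g (Y' ∘ Sum.inr)) Y w
      = fderiv ℝ g (Y ∘ Sum.inr) (w ∘ Sum.inr) := by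
  have h1 : (fun Y' : (Fin n₁ ⊕ Fin n₂) → ℝ => g (Y' ∘ Sum.inr)) = g ∘ (projR n₁ n₂) := rfl
  rw [h1, fderiv_comp Y hg (projR n₁ n₂).differentiableAt, (projR n₁ n₂).fderiv]
  rfl

variable {n₁ n₂ : ℕ} {U₁ : Set (Fin n₁ → ℝ)} {U₂ : Set (Fin n₂ → ℝ)}
    {F₁ : (Fin n₁ → ℝ) → (Fin n₁ → ℝ) → ℝ} {F₂ : (Fin n₂ → ℝ) → (Fin n₂ → ℝ) → ℝ}
    {f : (Fin n₁ → ℝ) → (Fin n₂ → ℝ) → ℝ}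

lemma twisted_sq {x : Fin n₁ → ℝ} {u : Fin n₂ → ℝ} (Y : (Fin n₁ ⊕ Fin n₂) → ℝ) :
    (twisted F₁ F₂ f (Sum.elim x u) Y)^2
      = Asq F₁ x (Y ∘ Sum.inl) + (f x u)^2 * Asq F₂ u (Y ∘ Sum.inr) := by
  unfold twisted Asq
  rw [Sum.elim_comp_inl, Sum.elim_comp_inr]
  rw [Real.sq_sqrt (by positivity)]

/-- the open set of fiber vectors with both components nonzero -/
def goodSet (n₁ n₂ : ℕ) : Set ((Fin n₁ ⊕ Fin n₂) → ℝ) :=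
  {Y | Y ∘ Sum.inl ≠ 0 ∧ Y ∘ Sum.inr ≠ 0}

lemma goodSet_isOpen : IsOpen (goodSet n₁ n₂) := by
  have h1 : IsOpen ((projL n₁ n₂) ⁻¹' {z : Fin n₁ → ℝ | z ≠ 0}) :=
    (isOpen_compl_singleton).preimage (projL n₁ n₂).continuous
  have h2 : IsOpen ((projR n₁ n₂) ⁻¹' {z : Fin n₂ → ℝ | z ≠ 0}) :=
    (isOpen_compl_singleton).preimage (projR n₁ n₂).continuous
  exact h1.inter h2

section PointFree

variable (hF₁ : IsFinslerMetric U₁ F₁) (hF₂ : IsFinslerMetric U₂ F₂)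
    {x : Fin n₁ → ℝ} (hx : x ∈ U₁) {u : Fin n₂ → ℝ} (hu : u ∈ U₂)

include hF₁ hF₂ hx hu

lemma pdy_twisted_inl (j : Fin n₁) {Y : (Fin n₁ ⊕ Fin n₂) → ℝ}
    (hY : Y ∈ goodSet n₁ n₂) :
    pdy (Sum.inl j) (fun a b => (twisted F₁ F₂ f a b)^2) (Sum.elim x u) Y
      = psiF F₁ x j (Y ∘ Sum.inl) := by
  obtain ⟨hYl, hYr⟩ := hY
  have hfun : (fun Y' => (twisted F₁ F₂ f (Sum.elim x u) Y')^2)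
      = fun Y' => Asq F₁ x (Y' ∘ Sum.inl) + (f x u)^2 * Asq F₂ u (Y' ∘ Sum.inr) :=
    funext fun Y' => twisted_sq Y'
  have hd1 : DifferentiableAt ℝ (fun Y' : (Fin n₁ ⊕ Fin n₂) → ℝ => Asq F₁ x (Y' ∘ Sum.inl)) Y :=
    diff_comp_inl ((Asq_contDiffAt hF₁ hx hYl).differentiableAt (by simp))
  have hd2 : DifferentiableAt ℝ (fun Y' : (Fin n₁ ⊕ Fin n₂) → ℝ => Asq F₂ u (Y' ∘ Sum.inr)) Y :=
    diff_comp_inr ((Asq_contDiffAt hF₂ hu hYr).differentiableAt (by simp))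
  unfold pdy
  rw [hfun, fderiv_fun_add hd1 (hd2.const_mul _), ContinuousLinearMap.add_apply,
    fderiv_const_mul hd2, ContinuousLinearMap.smul_apply,
    fderiv_comp_inl ((Asq_contDiffAt hF₁ hx hYl).differentiableAt (by simp)),
    fderiv_comp_inr ((Asq_contDiffAt hF₂ hu hYr).differentiableAt (by simp)),
    single_inl_comp_inl, single_inl_comp_inr]
  simp [psiF]

lemma pdy_twisted_inr (j : Fin n₂) {Y : (Fin n₁ ⊕ Fin n₂) → ℝ}
    (hY : Y ∈ goodSet n₁ n₂) :
    pdy (Sum.inr j) (fun a b => (twisted F₁ F₂ f a b)^2) (Sum.elim x u) Y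
      = (f x u)^2 * psiF F₂ u j (Y ∘ Sum.inr) := by
  obtain ⟨hYl, hYr⟩ := hY
  have hfun : (fun Y' => (twisted F₁ F₂ f (Sum.elim x u) Y')^2)
      = fun Y' => Asq F₁ x (Y' ∘ Sum.inl) + (f x u)^2 * Asq F₂ u (Y' ∘ Sum.inr) :=
    funext fun Y' => twisted_sq Y'
  have hd1 : DifferentiableAt ℝ (fun Y' : (Fin n₁ ⊕ Fin n₂) → ℝ => Asq F₁ x (Y' ∘ Sum.inl)) Y :=
    diff_comp_inl ((Asq_contDiffAt hF₁ hx hYl).differentiableAt (by simp))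
  have hd2 : DifferentiableAt ℝ (fun Y' : (Fin n₁ ⊕ Fin n₂) → ℝ => Asq F₂ u (Y' ∘ Sum.inr)) Y :=
    diff_comp_inr ((Asq_contDiffAt hF₂ hu hYr).differentiableAt (by simp))
  unfold pdy
  rw [hfun, fderiv_fun_add hd1 (hd2.const_mul _), ContinuousLinearMap.add_apply,
    fderiv_const_mul hd2, ContinuousLinearMap.smul_apply,
    fderiv_comp_inl ((Asq_contDiffAt hF₁ hx hYl).differentiableAt (by simp)),
    fderiv_comp_inr ((Asq_contDiffAt hF₂ hu hYr).differentiableAt (by simp)),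
    single_inr_comp_inl, single_inr_comp_inr]
  simp [psiF]

lemma fTensor_twisted_ll (i j : Fin n₁) {Y : (Fin n₁ ⊕ Fin n₂) → ℝ}
    (hY : Y ∈ goodSet n₁ n₂) :
    fTensor (twisted F₁ F₂ f) (Sum.inl i) (Sum.inl j) (Sum.elim x u) Y
      = fTensor F₁ i j x (Y ∘ Sum.inl) := by
  have heq : (fun Y' => pdy (Sum.inl j) (fun a b => (twisted F₁ F₂ f a b)^2) (Sum.elim x u) Y')
      =ᶠ[nhds Y] fun Y' => psiF F₁ x j (Y' ∘ Sum.inl) := by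
    filter_upwards [goodSet_isOpen.mem_nhds hY] with Z hZ
    exact pdy_twisted_inl hF₁ hF₂ hx hu j hZ
  have houter : fTensor (twisted F₁ F₂ f) (Sum.inl i) (Sum.inl j) (Sum.elim x u) Y
      = (1/2) * fderiv ℝ
          (fun Y' => pdy (Sum.inl j) (fun a b => (twisted F₁ F₂ f a b)^2) (Sum.elim x u) Y')
          Y (Pi.single (Sum.inl i) 1) := rfl
  rw [houter, heq.fderiv_eq (𝕜 := ℝ),
    fderiv_comp_inl ((psiF_contDiffAt hF₁ hx hY.1 j).differentiableAt (by simp)),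
    single_inl_comp_inl]
  rw [fTensor_eq_fderiv_psiF]

lemma fTensor_twisted_lr (i : Fin n₁) (j : Fin n₂) {Y : (Fin n₁ ⊕ Fin n₂) → ℝ}
    (hY : Y ∈ goodSet n₁ n₂) :
    fTensor (twisted F₁ F₂ f) (Sum.inl i) (Sum.inr j) (Sum.elim x u) Y = 0 := by
  have heq : (fun Y' => pdy (Sum.inr j) (fun a b => (twisted F₁ F₂ f a b)^2) (Sum.elim x u) Y')
      =ᶠ[nhds Y] fun Y' => (f x u)^2 * psiF F₂ u j (Y' ∘ Sum.inr) := by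
    filter_upwards [goodSet_isOpen.mem_nhds hY] with Z hZ
    exact pdy_twisted_inr hF₁ hF₂ hx hu j hZ
  have houter : fTensor (twisted F₁ F₂ f) (Sum.inl i) (Sum.inr j) (Sum.elim x u) Y
      = (1/2) * fderiv ℝ
          (fun Y' => pdy (Sum.inr j) (fun a b => (twisted F₁ F₂ f a b)^2) (Sum.elim x u) Y')
          Y (Pi.single (Sum.inl i) 1) := rfl
  have hd : DifferentiableAt ℝ
      (fun Y' : (Fin n₁ ⊕ Fin n₂) → ℝ => psiF F₂ u j (Y' ∘ Sum.inr)) Y :=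
    diff_comp_inr ((psiF_contDiffAt hF₂ hu hY.2 j).differentiableAt (by simp))
  rw [houter, heq.fderiv_eq (𝕜 := ℝ), fderiv_const_mul hd, ContinuousLinearMap.smul_apply,
    fderiv_comp_inr ((psiF_contDiffAt hF₂ hu hY.2 j).differentiableAt (by simp)),
    single_inl_comp_inr]
  simp

lemma fTensor_twisted_rl (i : Fin n₂) (j : Fin n₁) {Y : (Fin n₁ ⊕ Fin n₂) → ℝ}
    (hY : Y ∈ goodSet n₁ n₂) :
    fTensor (twisted F₁ F₂ f) (Sum.inr i) (Sum.inl j) (Sum.elim x u) Y = 0 := by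
  have heq : (fun Y' => pdy (Sum.inl j) (fun a b => (twisted F₁ F₂ f a b)^2) (Sum.elim x u) Y')
      =ᶠ[nhds Y] fun Y' => psiF F₁ x j (Y' ∘ Sum.inl) := by
    filter_upwards [goodSet_isOpen.mem_nhds hY] with Z hZ
    exact pdy_twisted_inl hF₁ hF₂ hx hu j hZ
  have houter : fTensor (twisted F₁ F₂ f) (Sum.inr i) (Sum.inl j) (Sum.elim x u) Y
      = (1/2) * fderiv ℝ
          (fun Y' => pdy (Sum.inl j) (fun a b => (twisted F₁ F₂ f a b)^2) (Sum.elim x u) Y')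
          Y (Pi.single (Sum.inr i) 1) := rfl
  rw [houter, heq.fderiv_eq (𝕜 := ℝ),
    fderiv_comp_inl ((psiF_contDiffAt hF₁ hx hY.1 j).differentiableAt (by simp)),
    single_inr_comp_inl]
  simp

lemma fTensor_twisted_rr (i j : Fin n₂) {Y : (Fin n₁ ⊕ Fin n₂) → ℝ}
    (hY : Y ∈ goodSet n₁ n₂) :
    fTensor (twisted F₁ F₂ f) (Sum.inr i) (Sum.inr j) (Sum.elim x u) Y
      = (f x u)^2 * fTensor F₂ i j u (Y ∘ Sum.inr) := by
  have heq : (fun Y' => pdy (Sum.inr j) (fun a b => (twisted F₁ F₂ f a b)^2) (Sum.elim x u) Y')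
      =ᶠ[nhds Y] fun Y' => (f x u)^2 * psiF F₂ u j (Y' ∘ Sum.inr) := by
    filter_upwards [goodSet_isOpen.mem_nhds hY] with Z hZ
    exact pdy_twisted_inr hF₁ hF₂ hx hu j hZ
  have houter : fTensor (twisted F₁ F₂ f) (Sum.inr i) (Sum.inr j) (Sum.elim x u) Y
      = (1/2) * fderiv ℝ
          (fun Y' => pdy (Sum.inr j) (fun a b => (twisted F₁ F₂ f a b)^2) (Sum.elim x u) Y')
          Y (Pi.single (Sum.inr i) 1) := rfl
  have hd : DifferentiableAt ℝ
      (fun Y' : (Fin n₁ ⊕ Fin n₂) → ℝ => psiF F₂ u j (Y' ∘ Sum.inr)) Y :=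
    diff_comp_inr ((psiF_contDiffAt hF₂ hu hY.2 j).differentiableAt (by simp))
  rw [houter, heq.fderiv_eq (𝕜 := ℝ), fderiv_const_mul hd, ContinuousLinearMap.smul_apply,
    fderiv_comp_inr ((psiF_contDiffAt hF₂ hu hY.2 j).differentiableAt (by simp)),
    single_inr_comp_inr]
  rw [fTensor_eq_fderiv_psiF]
  simp [smul_eq_mul]; ring

lemma cartan_twisted_lr (i : Fin n₁) (j : Fin n₂) (ct : Fin n₁ ⊕ Fin n₂)
    {Y : (Fin n₁ ⊕ Fin n₂) → ℝ} (hY : Y ∈ goodSet n₁ n₂) :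
    cartan (twisted F₁ F₂ f) (Sum.inl i) (Sum.inr j) ct (Sum.elim x u) Y = 0 := by
  have heq : (fun Y' => fTensor (twisted F₁ F₂ f) (Sum.inl i) (Sum.inr j) (Sum.elim x u) Y')
      =ᶠ[nhds Y] fun _ => (0:ℝ) := by
    filter_upwards [goodSet_isOpen.mem_nhds hY] with Z hZ
    exact fTensor_twisted_lr hF₁ hF₂ hx hu i j hZ
  have houter : cartan (twisted F₁ F₂ f) (Sum.inl i) (Sum.inr j) ct (Sum.elim x u) Y
      = (1/2) * fderiv ℝ
          (fun Y' => fTensor (twisted F₁ F₂ f) (Sum.inl i) (Sum.inr j) (Sum.elim x u) Y')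
          Y (Pi.single ct 1) := rfl
  rw [houter, heq.fderiv_eq (𝕜 := ℝ), fderiv_fun_const]
  simp

lemma cartan_twisted_rl (i : Fin n₂) (j : Fin n₁) (ct : Fin n₁ ⊕ Fin n₂)
    {Y : (Fin n₁ ⊕ Fin n₂) → ℝ} (hY : Y ∈ goodSet n₁ n₂) :
    cartan (twisted F₁ F₂ f) (Sum.inr i) (Sum.inl j) ct (Sum.elim x u) Y = 0 := by
  have heq : (fun Y' => fTensor (twisted F₁ F₂ f) (Sum.inr i) (Sum.inl j) (Sum.elim x u) Y')
      =ᶠ[nhds Y] fun _ => (0:ℝ) := by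
    filter_upwards [goodSet_isOpen.mem_nhds hY] with Z hZ
    exact fTensor_twisted_rl hF₁ hF₂ hx hu i j hZ
  have houter : cartan (twisted F₁ F₂ f) (Sum.inr i) (Sum.inl j) ct (Sum.elim x u) Y
      = (1/2) * fderiv ℝ
          (fun Y' => fTensor (twisted F₁ F₂ f) (Sum.inr i) (Sum.inl j) (Sum.elim x u) Y')
          Y (Pi.single ct 1) := rfl
  rw [houter, heq.fderiv_eq (𝕜 := ℝ), fderiv_fun_const]
  simp

lemma cartan_twisted_lll (i j k : Fin n₁)
    {Y : (Fin n₁ ⊕ Fin n₂) → ℝ} (hY : Y ∈ goodSet n₁ n₂) :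
    cartan (twisted F₁ F₂ f) (Sum.inl i) (Sum.inl j) (Sum.inl k) (Sum.elim x u) Y
      = cartan F₁ i j k x (Y ∘ Sum.inl) := by
  have heq : (fun Y' => fTensor (twisted F₁ F₂ f) (Sum.inl i) (Sum.inl j) (Sum.elim x u) Y')
      =ᶠ[nhds Y] fun Y' => fTensor F₁ i j x (Y' ∘ Sum.inl) := by
    filter_upwards [goodSet_isOpen.mem_nhds hY] with Z hZ
    exact fTensor_twisted_ll hF₁ hF₂ hx hu i j hZ
  have houter : cartan (twisted F₁ F₂ f) (Sum.inl i) (Sum.inl j) (Sum.inl k) (Sum.elim x u) Y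
      = (1/2) * fderiv ℝ
          (fun Y' => fTensor (twisted F₁ F₂ f) (Sum.inl i) (Sum.inl j) (Sum.elim x u) Y')
          Y (Pi.single (Sum.inl k) 1) := rfl
  rw [houter, heq.fderiv_eq (𝕜 := ℝ),
    fderiv_comp_inl ((fTensor_contDiffAt hF₁ hx hY.1 i j).differentiableAt (by simp)),
    single_inl_comp_inl]
  rw [cartan_eq_fderiv]

lemma cartan_twisted_rrr (i j k : Fin n₂)
    {Y : (Fin n₁ ⊕ Fin n₂) → ℝ} (hY : Y ∈ goodSet n₁ n₂) :
    cartan (twisted F₁ F₂ f) (Sum.inr i) (Sum.inr j) (Sum.inr k) (Sum.elim x u) Y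
      = (f x u)^2 * cartan F₂ i j k u (Y ∘ Sum.inr) := by
  have heq : (fun Y' => fTensor (twisted F₁ F₂ f) (Sum.inr i) (Sum.inr j) (Sum.elim x u) Y')
      =ᶠ[nhds Y] fun Y' => (f x u)^2 * fTensor F₂ i j u (Y' ∘ Sum.inr) := by
    filter_upwards [goodSet_isOpen.mem_nhds hY] with Z hZ
    exact fTensor_twisted_rr hF₁ hF₂ hx hu i j hZ
  have houter : cartan (twisted F₁ F₂ f) (Sum.inr i) (Sum.inr j) (Sum.inr k) (Sum.elim x u) Y
      = (1/2) * fderiv ℝ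
          (fun Y' => fTensor (twisted F₁ F₂ f) (Sum.inr i) (Sum.inr j) (Sum.elim x u) Y')
          Y (Pi.single (Sum.inr k) 1) := rfl
  have hd : DifferentiableAt ℝ
      (fun Y' : (Fin n₁ ⊕ Fin n₂) → ℝ => fTensor F₂ i j u (Y' ∘ Sum.inr)) Y :=
    diff_comp_inr ((fTensor_contDiffAt hF₂ hu hY.2 i j).differentiableAt (by simp))
  rw [houter, heq.fderiv_eq (𝕜 := ℝ), fderiv_const_mul hd, ContinuousLinearMap.smul_apply,
    fderiv_comp_inr ((fTensor_contDiffAt hF₂ hu hY.2 i j).differentiableAt (by simp)),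
    single_inr_comp_inr]
  rw [cartan_eq_fderiv]
  simp [smul_eq_mul]; ring

lemma cartan_twisted_llr (i j : Fin n₁) (k : Fin n₂)
    {Y : (Fin n₁ ⊕ Fin n₂) → ℝ} (hY : Y ∈ goodSet n₁ n₂) :
    cartan (twisted F₁ F₂ f) (Sum.inl i) (Sum.inl j) (Sum.inr k) (Sum.elim x u) Y = 0 := by
  have heq : (fun Y' => fTensor (twisted F₁ F₂ f) (Sum.inl i) (Sum.inl j) (Sum.elim x u) Y')
      =ᶠ[nhds Y] fun Y' => fTensor F₁ i j x (Y' ∘ Sum.inl) := by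
    filter_upwards [goodSet_isOpen.mem_nhds hY] with Z hZ
    exact fTensor_twisted_ll hF₁ hF₂ hx hu i j hZ
  have houter : cartan (twisted F₁ F₂ f) (Sum.inl i) (Sum.inl j) (Sum.inr k) (Sum.elim x u) Y
      = (1/2) * fderiv ℝ
          (fun Y' => fTensor (twisted F₁ F₂ f) (Sum.inl i) (Sum.inl j) (Sum.elim x u) Y')
          Y (Pi.single (Sum.inr k) 1) := rfl
  rw [houter, heq.fderiv_eq (𝕜 := ℝ),
    fderiv_comp_inl ((fTensor_contDiffAt hF₁ hx hY.1 i j).differentiableAt (by simp)),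
    single_inr_comp_inl]
  simp

omit hF₁ hF₂ hx hu in
lemma elim_mem_goodSet {y : Fin n₁ → ℝ} {v : Fin n₂ → ℝ} (hy : y ≠ 0) (hv : v ≠ 0) :
    Sum.elim y v ∈ goodSet n₁ n₂ :=
  ⟨by rw [Sum.elim_comp_inl]; exact hy, by rw [Sum.elim_comp_inr]; exact hv⟩

lemma gMat_twisted {y : Fin n₁ → ℝ} {v : Fin n₂ → ℝ} (hy : y ≠ 0) (hv : v ≠ 0) :
    gMat (twisted F₁ F₂ f) (Sum.elim x u) (Sum.elim y v)
      = Matrix.fromBlocks (gMat F₁ x y) 0 0 ((f x u)^2 • gMat F₂ u v) := by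
  have hY := elim_mem_goodSet (n₁ := n₁) (n₂ := n₂) hy hv
  ext a b
  rcases a with i | i <;> rcases b with j | j
  · rw [show gMat (twisted F₁ F₂ f) (Sum.elim x u) (Sum.elim y v) (Sum.inl i) (Sum.inl j)
        = fTensor (twisted F₁ F₂ f) (Sum.inl i) (Sum.inl j) (Sum.elim x u) (Sum.elim y v) from rfl,
      fTensor_twisted_ll hF₁ hF₂ hx hu i j hY, Sum.elim_comp_inl]
    rfl
  · rw [show gMat (twisted F₁ F₂ f) (Sum.elim x u) (Sum.elim y v) (Sum.inl i) (Sum.inr j)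
        = fTensor (twisted F₁ F₂ f) (Sum.inl i) (Sum.inr j) (Sum.elim x u) (Sum.elim y v) from rfl,
      fTensor_twisted_lr hF₁ hF₂ hx hu i j hY]
    rfl
  · rw [show gMat (twisted F₁ F₂ f) (Sum.elim x u) (Sum.elim y v) (Sum.inr i) (Sum.inl j)
        = fTensor (twisted F₁ F₂ f) (Sum.inr i) (Sum.inl j) (Sum.elim x u) (Sum.elim y v) from rfl,
      fTensor_twisted_rl hF₁ hF₂ hx hu i j hY]
    rfl
  · rw [show gMat (twisted F₁ F₂ f) (Sum.elim x u) (Sum.elim y v) (Sum.inr i) (Sum.inr j)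
        = fTensor (twisted F₁ F₂ f) (Sum.inr i) (Sum.inr j) (Sum.elim x u) (Sum.elim y v) from rfl,
      fTensor_twisted_rr hF₁ hF₂ hx hu i j hY, Sum.elim_comp_inr]
    simp [Matrix.fromBlocks, gMat]

lemma gInv_twisted {y : Fin n₁ → ℝ} {v : Fin n₂ → ℝ} (hy : y ≠ 0) (hv : v ≠ 0)
    (hfne : f x u ≠ 0) :
    gInv (twisted F₁ F₂ f) (Sum.elim x u) (Sum.elim y v)
      = Matrix.fromBlocks (gInv F₁ x y) 0 0 (((f x u)^2)⁻¹ • gInv F₂ u v) := by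
  have hc : (f x u)^2 ≠ 0 := pow_ne_zero 2 hfne
  have hdet1 : (gMat F₁ x y).det ≠ 0 := gMat_det_ne_zero hF₁ hx hy
  have hdet2 : (gMat F₂ u v).det ≠ 0 := gMat_det_ne_zero hF₂ hu hv
  unfold gInv
  rw [gMat_twisted hF₁ hF₂ hx hu hy hv]
  apply Matrix.inv_eq_right_inv
  rw [Matrix.fromBlocks_multiply]
  have h1 : gMat F₁ x y * (gMat F₁ x y)⁻¹ = 1 :=
    Matrix.mul_nonsing_inv _ (isUnit_iff_ne_zero.2 hdet1)
  have h2' : gMat F₂ u v * (gMat F₂ u v)⁻¹ = 1 :=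
    Matrix.mul_nonsing_inv _ (isUnit_iff_ne_zero.2 hdet2)
  have h2 : ((f x u)^2 • gMat F₂ u v) * (((f x u)^2)⁻¹ • (gMat F₂ u v)⁻¹) = 1 := by
    rw [Matrix.smul_mul, Matrix.mul_smul, smul_smul, mul_inv_cancel₀ hc, one_smul, h2']
  simp only [Matrix.mul_zero, Matrix.zero_mul, add_zero, zero_add]
  rw [h1, h2, Matrix.fromBlocks_one]

lemma meanCartan_twisted_inl {y : Fin n₁ → ℝ} {v : Fin n₂ → ℝ} (hy : y ≠ 0) (hv : v ≠ 0)
    (hfne : f x u ≠ 0) (α : Fin n₁) :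
    meanCartan (twisted F₁ F₂ f) (Sum.inl α) (Sum.elim x u) (Sum.elim y v)
      = meanCartan F₁ α x y := by
  have hY := elim_mem_goodSet (n₁ := n₁) (n₂ := n₂) hy hv
  have h11 : ∀ β γ : Fin n₁,
      cartan (twisted F₁ F₂ f) (Sum.inl α) (Sum.inl β) (Sum.inl γ) (Sum.elim x u) (Sum.elim y v)
        = cartan F₁ α β γ x y := fun β γ => by
    rw [cartan_twisted_lll hF₁ hF₂ hx hu α β γ hY, Sum.elim_comp_inl]
  have hlr : ∀ (t w : Fin n₂),
      cartan (twisted F₁ F₂ f) (Sum.inl α) (Sum.inr t) (Sum.inr w) (Sum.elim x u) (Sum.elim y v)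
        = 0 := fun t w => cartan_twisted_lr hF₁ hF₂ hx hu α t _ hY
  unfold meanCartan
  rw [gInv_twisted hF₁ hF₂ hx hu hy hv hfne]
  rw [Fintype.sum_sum_type]
  have e1 : ∀ β : Fin n₁,
      ∑ c, (Matrix.fromBlocks (gInv F₁ x y) 0 0 (((f x u)^2)⁻¹ • gInv F₂ u v)) (Sum.inl β) c
        * cartan (twisted F₁ F₂ f) (Sum.inl α) (Sum.inl β) c (Sum.elim x u) (Sum.elim y v)
      = ∑ γ, gInv F₁ x y β γ * cartan F₁ α β γ x y := by
    intro β
    rw [Fintype.sum_sum_type]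
    have : ∀ w : Fin n₂,
        (Matrix.fromBlocks (gInv F₁ x y) 0 0 (((f x u)^2)⁻¹ • gInv F₂ u v)) (Sum.inl β) (Sum.inr w)
          = 0 := fun w => rfl
    simp only [this, zero_mul, Finset.sum_const_zero, add_zero]
    congr 1; funext γ
    rw [h11 β γ]
    rfl
  have e2 : ∀ t : Fin n₂,
      ∑ c, (Matrix.fromBlocks (gInv F₁ x y) 0 0 (((f x u)^2)⁻¹ • gInv F₂ u v)) (Sum.inr t) c
        * cartan (twisted F₁ F₂ f) (Sum.inl α) (Sum.inr t) c (Sum.elim x u) (Sum.elim y v)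
      = 0 := by
    intro t
    rw [Fintype.sum_sum_type]
    have hz1 : ∀ γ : Fin n₁,
        (Matrix.fromBlocks (gInv F₁ x y) 0 0 (((f x u)^2)⁻¹ • gInv F₂ u v)) (Sum.inr t) (Sum.inl γ)
          = 0 := fun γ => rfl
    simp only [hz1, zero_mul, Finset.sum_const_zero, zero_add]
    have : ∀ w : Fin n₂,
        cartan (twisted F₁ F₂ f) (Sum.inl α) (Sum.inr t) (Sum.inr w) (Sum.elim x u) (Sum.elim y v)
          = 0 := fun w => hlr t w
    simp [this]
  rw [Finset.sum_congr rfl (fun β _ => e1 β), Finset.sum_congr rfl (fun t _ => e2 t)]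
  simp [meanCartan]

lemma meanCartan_twisted_inr {y : Fin n₁ → ℝ} {v : Fin n₂ → ℝ} (hy : y ≠ 0) (hv : v ≠ 0)
    (hfne : f x u ≠ 0) (s : Fin n₂) :
    meanCartan (twisted F₁ F₂ f) (Sum.inr s) (Sum.elim x u) (Sum.elim y v)
      = meanCartan F₂ s u v := by
  have hY := elim_mem_goodSet (n₁ := n₁) (n₂ := n₂) hy hv
  have hc : (f x u)^2 ≠ 0 := pow_ne_zero 2 hfne
  have hrr : ∀ t w : Fin n₂,
      cartan (twisted F₁ F₂ f) (Sum.inr s) (Sum.inr t) (Sum.inr w) (Sum.elim x u) (Sum.elim y v)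
        = (f x u)^2 * cartan F₂ s t w u v := fun t w => by
    rw [cartan_twisted_rrr hF₁ hF₂ hx hu s t w hY, Sum.elim_comp_inr]
  have hrl : ∀ (β : Fin n₁) (c : Fin n₁ ⊕ Fin n₂),
      cartan (twisted F₁ F₂ f) (Sum.inr s) (Sum.inl β) c (Sum.elim x u) (Sum.elim y v)
        = 0 := fun β c => cartan_twisted_rl hF₁ hF₂ hx hu s β c hY
  unfold meanCartan
  rw [gInv_twisted hF₁ hF₂ hx hu hy hv hfne]
  rw [Fintype.sum_sum_type]
  have e1 : ∀ β : Fin n₁,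
      ∑ c, (Matrix.fromBlocks (gInv F₁ x y) 0 0 (((f x u)^2)⁻¹ • gInv F₂ u v)) (Sum.inl β) c
        * cartan (twisted F₁ F₂ f) (Sum.inr s) (Sum.inl β) c (Sum.elim x u) (Sum.elim y v)
      = 0 := by
    intro β
    simp [hrl β]
  have e2 : ∀ t : Fin n₂,
      ∑ c, (Matrix.fromBlocks (gInv F₁ x y) 0 0 (((f x u)^2)⁻¹ • gInv F₂ u v)) (Sum.inr t) c
        * cartan (twisted F₁ F₂ f) (Sum.inr s) (Sum.inr t) c (Sum.elim x u) (Sum.elim y v)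
      = ∑ w, gInv F₂ u v t w * cartan F₂ s t w u v := by
    intro t
    rw [Fintype.sum_sum_type]
    have hz1 : ∀ γ : Fin n₁,
        (Matrix.fromBlocks (gInv F₁ x y) 0 0 (((f x u)^2)⁻¹ • gInv F₂ u v)) (Sum.inr t) (Sum.inl γ)
          = 0 := fun γ => rfl
    simp only [hz1, zero_mul, Finset.sum_const_zero, zero_add]
    congr 1; funext w
    rw [hrr t w]
    have : (Matrix.fromBlocks (gInv F₁ x y) 0 0 (((f x u)^2)⁻¹ • gInv F₂ u v))
        (Sum.inr t) (Sum.inr w) = ((f x u)^2)⁻¹ * gInv F₂ u v t w := rfl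
    rw [this]
    field_simp
  rw [Finset.sum_congr rfl (fun β _ => e1 β), Finset.sum_congr rfl (fun t _ => e2 t)]
  simp [meanCartan]

lemma lowerY_twisted_inl {y : Fin n₁ → ℝ} {v : Fin n₂ → ℝ} (hy : y ≠ 0) (hv : v ≠ 0)
    (α : Fin n₁) :
    lowerY (twisted F₁ F₂ f) (Sum.inl α) (Sum.elim x u) (Sum.elim y v)
      = lowerY F₁ α x y := by
  have hY := elim_mem_goodSet (n₁ := n₁) (n₂ := n₂) hy hv
  unfold lowerY
  rw [Fintype.sum_sum_type]
  have h1 : ∀ β : Fin n₁,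
      fTensor (twisted F₁ F₂ f) (Sum.inl α) (Sum.inl β) (Sum.elim x u) (Sum.elim y v)
        * (Sum.elim y v) (Sum.inl β) = fTensor F₁ α β x y * y β := fun β => by
    rw [fTensor_twisted_ll hF₁ hF₂ hx hu α β hY, Sum.elim_comp_inl]; rfl
  have h2 : ∀ t : Fin n₂,
      fTensor (twisted F₁ F₂ f) (Sum.inl α) (Sum.inr t) (Sum.elim x u) (Sum.elim y v)
        * (Sum.elim y v) (Sum.inr t) = 0 := fun t => by
    rw [fTensor_twisted_lr hF₁ hF₂ hx hu α t hY, zero_mul]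
  rw [Finset.sum_congr rfl (fun β _ => h1 β), Finset.sum_congr rfl (fun t _ => h2 t)]
  simp

lemma lowerY_twisted_inr {y : Fin n₁ → ℝ} {v : Fin n₂ → ℝ} (hy : y ≠ 0) (hv : v ≠ 0)
    (s : Fin n₂) :
    lowerY (twisted F₁ F₂ f) (Sum.inr s) (Sum.elim x u) (Sum.elim y v)
      = (f x u)^2 * lowerY F₂ s u v := by
  have hY := elim_mem_goodSet (n₁ := n₁) (n₂ := n₂) hy hv
  unfold lowerY
  rw [Fintype.sum_sum_type]
  have h1 : ∀ β : Fin n₁,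
      fTensor (twisted F₁ F₂ f) (Sum.inr s) (Sum.inl β) (Sum.elim x u) (Sum.elim y v)
        * (Sum.elim y v) (Sum.inl β) = 0 := fun β => by
    rw [fTensor_twisted_rl hF₁ hF₂ hx hu s β hY, zero_mul]
  have h2 : ∀ t : Fin n₂,
      fTensor (twisted F₁ F₂ f) (Sum.inr s) (Sum.inr t) (Sum.elim x u) (Sum.elim y v)
        * (Sum.elim y v) (Sum.inr t) = (f x u)^2 * (fTensor F₂ s t u v * v t) := fun t => by
    rw [fTensor_twisted_rr hF₁ hF₂ hx hu s t hY, Sum.elim_comp_inr]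
    rw [show (Sum.elim y v) (Sum.inr t) = v t from rfl]
    ring
  rw [Finset.sum_congr rfl (fun β _ => h1 β), Finset.sum_congr rfl (fun t _ => h2 t)]
  rw [← Finset.mul_sum]
  simp [lowerY]

lemma K_zero {y : Fin n₁ → ℝ} {v : Fin n₂ → ℝ} (hy : y ≠ 0) (hv : v ≠ 0)
    (hfne : f x u ≠ 0) :
    ∑ s, v s * meanCartan (twisted F₁ F₂ f) (Sum.inr s) (Sum.elim x u) (Sum.elim y v) = 0 := by
  have h1 : ∀ s, meanCartan (twisted F₁ F₂ f) (Sum.inr s) (Sum.elim x u) (Sum.elim y v)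
      = meanCartan F₂ s u v := fun s => meanCartan_twisted_inr hF₁ hF₂ hx hu hy hv hfne s
  simp only [h1]
  have hswap : ∑ s, v s * meanCartan F₂ s u v
      = ∑ t, ∑ w, gInv F₂ u v t w * (∑ s, v s * cartan F₂ s t w u v) := by
    unfold meanCartan
    simp only [Finset.mul_sum]
    rw [Finset.sum_comm]
    congr 1; funext t
    rw [Finset.sum_comm]
    congr 1; funext w
    congr 1; funext s
    ring
  rw [hswap]
  have hz : ∀ t w : Fin n₂, ∑ s, v s * cartan F₂ s t w u v = 0 := eulerC hF₂ hu hv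
  simp [hz]

lemma L_zero {y : Fin n₁ → ℝ} {v : Fin n₂ → ℝ} (hy : y ≠ 0) (hv : v ≠ 0)
    (hfne : f x u ≠ 0) :
    ∑ α, y α * meanCartan (twisted F₁ F₂ f) (Sum.inl α) (Sum.elim x u) (Sum.elim y v) = 0 := by
  have h1 : ∀ α, meanCartan (twisted F₁ F₂ f) (Sum.inl α) (Sum.elim x u) (Sum.elim y v)
      = meanCartan F₁ α x y := fun α => meanCartan_twisted_inl hF₁ hF₂ hx hu hy hv hfne α
  simp only [h1]
  have hswap : ∑ α, y α * meanCartan F₁ α x y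
      = ∑ t, ∑ w, gInv F₁ x y t w * (∑ α, y α * cartan F₁ α t w x y) := by
    unfold meanCartan
    simp only [Finset.mul_sum]
    rw [Finset.sum_comm]
    congr 1; funext t
    rw [Finset.sum_comm]
    congr 1; funext w
    congr 1; funext α
    ring
  rw [hswap]
  have hz : ∀ t w : Fin n₁, ∑ α, y α * cartan F₁ α t w x y = 0 := eulerC hF₁ hx hy
  simp [hz]

end PointFree

end Twisted

section SumHelpers

variable {κ₁ κ₂ : Type*} [Fintype κ₁] [Fintype κ₂]

lemma const_double_sum (c : ℝ) (g : κ₁ → κ₂ → ℝ) :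
    ∑ s, ∑ t, c * g s t = c * ∑ s, ∑ t, g s t := by
  simp only [← Finset.mul_sum]

lemma double_sum_prod (c : ℝ) (φ : κ₁ → ℝ) (ψ : κ₂ → ℝ) :
    ∑ s, ∑ t, c * (φ s * ψ t) = c * ((∑ s, φ s) * (∑ t, ψ t)) := by
  simp only [← Finset.mul_sum, ← Finset.sum_mul]

lemma contract_identity {κ : Type*} [Fintype κ]
    (P Q Ia : ℝ) (w I ha : κ → ℝ) (h : κ → κ → ℝ)
    (hK : ∑ s, w s * I s = 0) :
    ∑ s, ∑ t, w s * w t * (P * (Ia * h s t + I s * ha t + I t * ha s) + Q * (Ia * I s * I t))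
      = P * Ia * (∑ s, ∑ t, w s * w t * h s t) := by
  have hstep : ∀ s t : κ, w s * w t * (P * (Ia * h s t + I s * ha t + I t * ha s) + Q * (Ia * I s * I t))
      = (P * Ia) * (w s * w t * h s t)
        + P * ((w s * I s) * (w t * ha t))
        + P * ((w s * ha s) * (w t * I t))
        + (Q * Ia) * ((w s * I s) * (w t * I t)) := fun s t => by ring
  calc ∑ s, ∑ t, w s * w t * (P * (Ia * h s t + I s * ha t + I t * ha s) + Q * (Ia * I s * I t))
      = ∑ s, ∑ t, ((P * Ia) * (w s * w t * h s t)
        + P * ((w s * I s) * (w t * ha t))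
        + P * ((w s * ha s) * (w t * I t))
        + (Q * Ia) * ((w s * I s) * (w t * I t))) := by
        exact Finset.sum_congr rfl fun s _ => Finset.sum_congr rfl fun t _ => hstep s t
    _ = (∑ s, ∑ t, (P * Ia) * (w s * w t * h s t))
        + (∑ s, ∑ t, P * ((w s * I s) * (w t * ha t)))
        + (∑ s, ∑ t, P * ((w s * ha s) * (w t * I t)))
        + (∑ s, ∑ t, (Q * Ia) * ((w s * I s) * (w t * I t))) := by
        simp only [Finset.sum_add_distrib]
    _ = (P * Ia) * (∑ s, ∑ t, w s * w t * h s t)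
        + P * ((∑ s, w s * I s) * (∑ t, w t * ha t))
        + P * ((∑ s, w s * ha s) * (∑ t, w t * I t))
        + (Q * Ia) * ((∑ s, w s * I s) * (∑ t, w t * I t)) := by
        rw [const_double_sum, double_sum_prod, double_sum_prod, double_sum_prod]
    _ = P * Ia * (∑ s, ∑ t, w s * w t * h s t) := by rw [hK]; ring

lemma double_sum_sub (g₁ g₂ : κ₁ → κ₂ → ℝ) :
    ∑ s, ∑ t, (g₁ s t - g₂ s t) = (∑ s, ∑ t, g₁ s t) - ∑ s, ∑ t, g₂ s t := by
  simp [Finset.sum_sub_distrib]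

end SumHelpers
theorem stmt_9 {n₁ n₂ : ℕ} {U₁ : Set (Fin n₁ → ℝ)} {U₂ : Set (Fin n₂ → ℝ)}
    {F₁ : (Fin n₁ → ℝ) → (Fin n₁ → ℝ) → ℝ}
    {F₂ : (Fin n₂ → ℝ) → (Fin n₂ → ℝ) → ℝ}
    {f : (Fin n₁ → ℝ) → (Fin n₂ → ℝ) → ℝ}
    (hF₁ : IsFinslerMetric U₁ F₁) (hF₂ : IsFinslerMetric U₂ F₂)
    (hf : ContDiffOn ℝ (⊤ : ℕ∞) (fun p : (Fin n₁ → ℝ) × (Fin n₂ → ℝ) => f p.1 p.2) (U₁ ×ˢ U₂))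
    (hfpos : ∀ x ∈ U₁, ∀ u ∈ U₂, 0 < f x u)

    {p q : ((Fin n₁ ⊕ Fin n₂) → ℝ) → ((Fin n₁ ⊕ Fin n₂) → ℝ) → ℝ}
    (hpq : ∀ x ∈ U₁, ∀ u ∈ U₂, ∀ (y : Fin n₁ → ℝ) (v : Fin n₂ → ℝ), y ≠ 0 → v ≠ 0 →
      p (Sum.elim x u) (Sum.elim y v) + q (Sum.elim x u) (Sum.elim y v) = 1)
    (hC : ∀ x ∈ U₁, ∀ u ∈ U₂, ∀ (y : Fin n₁ → ℝ) (v : Fin n₂ → ℝ), y ≠ 0 → v ≠ 0 →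
      meanCartanNormSq (twisted F₁ F₂ f) (Sum.elim x u) (Sum.elim y v) ≠ 0)
    (hsemi : ∀ x ∈ U₁, ∀ u ∈ U₂, ∀ (y : Fin n₁ → ℝ) (v : Fin n₂ → ℝ), y ≠ 0 → v ≠ 0 →
      ∀ a b c : Fin n₁ ⊕ Fin n₂,
        cartan (twisted F₁ F₂ f) a b c (Sum.elim x u) (Sum.elim y v)
          = p (Sum.elim x u) (Sum.elim y v) / (((n₁ : ℝ) + (n₂ : ℝ)) + 1)
              * (meanCartan (twisted F₁ F₂ f) a (Sum.elim x u) (Sum.elim y v)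
                  * angular (twisted F₁ F₂ f) b c (Sum.elim x u) (Sum.elim y v)
                + meanCartan (twisted F₁ F₂ f) b (Sum.elim x u) (Sum.elim y v)
                  * angular (twisted F₁ F₂ f) a c (Sum.elim x u) (Sum.elim y v)
                + meanCartan (twisted F₁ F₂ f) c (Sum.elim x u) (Sum.elim y v)
                  * angular (twisted F₁ F₂ f) a b (Sum.elim x u) (Sum.elim y v))
            + q (Sum.elim x u) (Sum.elim y v)
                / meanCartanNormSq (twisted F₁ F₂ f) (Sum.elim x u) (Sum.elim y v)
              * (meanCartan (twisted F₁ F₂ f) a (Sum.elim x u) (Sum.elim y v)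
                * meanCartan (twisted F₁ F₂ f) b (Sum.elim x u) (Sum.elim y v)
                * meanCartan (twisted F₁ F₂ f) c (Sum.elim x u) (Sum.elim y v))) :
    ∀ x ∈ U₁, ∀ u ∈ U₂, ∀ (y : Fin n₁ → ℝ) (v : Fin n₂ → ℝ), y ≠ 0 → v ≠ 0 →
      p (Sum.elim x u) (Sum.elim y v) = 0
      ∧ (∀ a b c : Fin n₁ ⊕ Fin n₂,
          cartan (twisted F₁ F₂ f) a b c (Sum.elim x u) (Sum.elim y v)
            = (meanCartanNormSq (twisted F₁ F₂ f) (Sum.elim x u) (Sum.elim y v))⁻¹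
              * (meanCartan (twisted F₁ F₂ f) a (Sum.elim x u) (Sum.elim y v)
                * meanCartan (twisted F₁ F₂ f) b (Sum.elim x u) (Sum.elim y v)
                * meanCartan (twisted F₁ F₂ f) c (Sum.elim x u) (Sum.elim y v))) := by
  intro x hx u hu y v hy hv
  have hY := elim_mem_goodSet (n₁ := n₁) (n₂ := n₂) hy hv
  have hfne : f x u ≠ 0 := ne_of_gt (hfpos x hx u hu)
  have hsem := hsemi x hx u hu y v hy hv
  have hC2 := hC x hx u hu y v hy hv
  have hq1pos : (0:ℝ) < (F₁ x y)^2 := Q_pos hF₁ hx hy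
  have hq2pos : (0:ℝ) < (F₂ u v)^2 := Q_pos hF₂ hu hv
  have hc2pos : (0:ℝ) < (f x u)^2 := by positivity
  have hFsq : (twisted F₁ F₂ f (Sum.elim x u) (Sum.elim y v))^2
      = (F₁ x y)^2 + (f x u)^2 * (F₂ u v)^2 := by
    rw [twisted_sq]
    unfold Asq
    rw [Sum.elim_comp_inl, Sum.elim_comp_inr]
  -- the contracted angular sum in the second factor
  have hangrr : ∀ s t : Fin n₂,
      v s * v t * angular (twisted F₁ F₂ f) (Sum.inr s) (Sum.inr t) (Sum.elim x u) (Sum.elim y v)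
        = (f x u)^2 * (fTensor F₂ s t u v * v s * v t)
          - ((twisted F₁ F₂ f (Sum.elim x u) (Sum.elim y v))^2)⁻¹ *
            (((f x u)^2 * (v s * lowerY F₂ s u v)) * ((f x u)^2 * (v t * lowerY F₂ t u v))) := by
    intro s t
    unfold angular
    rw [fTensor_twisted_rr hF₁ hF₂ hx hu s t hY, Sum.elim_comp_inr,
      lowerY_twisted_inr hF₁ hF₂ hx hu hy hv s, lowerY_twisted_inr hF₁ hF₂ hx hu hy hv t]
    ring
  have hsum2 : ∑ s, (f x u)^2 * (v s * lowerY F₂ s u v) = (f x u)^2 * (F₂ u v)^2 := by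
    rw [← Finset.mul_sum, lY_contract hF₂ hu hv]
  have hH2 : ∑ s, ∑ t, v s * v t *
        angular (twisted F₁ F₂ f) (Sum.inr s) (Sum.inr t) (Sum.elim x u) (Sum.elim y v)
      = (f x u)^2 * (F₂ u v)^2
        - ((twisted F₁ F₂ f (Sum.elim x u) (Sum.elim y v))^2)⁻¹ *
          (((f x u)^2 * (F₂ u v)^2) * ((f x u)^2 * (F₂ u v)^2)) := by
    calc ∑ s, ∑ t, v s * v t *
          angular (twisted F₁ F₂ f) (Sum.inr s) (Sum.inr t) (Sum.elim x u) (Sum.elim y v)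
        = ∑ s, ∑ t, ((f x u)^2 * (fTensor F₂ s t u v * v s * v t)
          - ((twisted F₁ F₂ f (Sum.elim x u) (Sum.elim y v))^2)⁻¹ *
            (((f x u)^2 * (v s * lowerY F₂ s u v)) * ((f x u)^2 * (v t * lowerY F₂ t u v)))) :=
          Finset.sum_congr rfl fun s _ => Finset.sum_congr rfl fun t _ => hangrr s t
      _ = (f x u)^2 * (∑ s, ∑ t, fTensor F₂ s t u v * v s * v t)
          - ((twisted F₁ F₂ f (Sum.elim x u) (Sum.elim y v))^2)⁻¹ *
            ((∑ s, (f x u)^2 * (v s * lowerY F₂ s u v)) *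
              (∑ t, (f x u)^2 * (v t * lowerY F₂ t u v))) := by
          rw [double_sum_sub, const_double_sum, double_sum_prod]
      _ = _ := by rw [eulerQ hF₂ hu hv, hsum2]
  have hH2pos : (0:ℝ) < ∑ s, ∑ t, v s * v t *
      angular (twisted F₁ F₂ f) (Sum.inr s) (Sum.inr t) (Sum.elim x u) (Sum.elim y v) := by
    rw [hH2, hFsq]
    have hden : (0:ℝ) < (F₁ x y)^2 + (f x u)^2 * (F₂ u v)^2 := by positivity
    have hval : (f x u)^2 * (F₂ u v)^2
        - ((F₁ x y)^2 + (f x u)^2 * (F₂ u v)^2)⁻¹ *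
          (((f x u)^2 * (F₂ u v)^2) * ((f x u)^2 * (F₂ u v)^2))
        = ((f x u)^2 * (F₂ u v)^2) * (F₁ x y)^2 / ((F₁ x y)^2 + (f x u)^2 * (F₂ u v)^2) := by
      field_simp
      ring
    rw [hval]
    positivity
  -- the contracted angular sum in the first factor
  have hangll : ∀ α β : Fin n₁,
      y α * y β * angular (twisted F₁ F₂ f) (Sum.inl α) (Sum.inl β) (Sum.elim x u) (Sum.elim y v)
        = (fTensor F₁ α β x y * y α * y β)
          - ((twisted F₁ F₂ f (Sum.elim x u) (Sum.elim y v))^2)⁻¹ *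
            ((y α * lowerY F₁ α x y) * (y β * lowerY F₁ β x y)) := by
    intro α β
    unfold angular
    rw [fTensor_twisted_ll hF₁ hF₂ hx hu α β hY, Sum.elim_comp_inl,
      lowerY_twisted_inl hF₁ hF₂ hx hu hy hv α, lowerY_twisted_inl hF₁ hF₂ hx hu hy hv β]
    ring
  have hH1 : ∑ α, ∑ β, y α * y β *
        angular (twisted F₁ F₂ f) (Sum.inl α) (Sum.inl β) (Sum.elim x u) (Sum.elim y v)
      = (F₁ x y)^2
        - ((twisted F₁ F₂ f (Sum.elim x u) (Sum.elim y v))^2)⁻¹ *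
          ((F₁ x y)^2 * (F₁ x y)^2) := by
    calc ∑ α, ∑ β, y α * y β *
          angular (twisted F₁ F₂ f) (Sum.inl α) (Sum.inl β) (Sum.elim x u) (Sum.elim y v)
        = ∑ α, ∑ β, ((fTensor F₁ α β x y * y α * y β)
          - ((twisted F₁ F₂ f (Sum.elim x u) (Sum.elim y v))^2)⁻¹ *
            ((y α * lowerY F₁ α x y) * (y β * lowerY F₁ β x y))) :=
          Finset.sum_congr rfl fun α _ => Finset.sum_congr rfl fun β _ => hangll α β
      _ = (∑ α, ∑ β, fTensor F₁ α β x y * y α * y β)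
          - ((twisted F₁ F₂ f (Sum.elim x u) (Sum.elim y v))^2)⁻¹ *
            ((∑ α, y α * lowerY F₁ α x y) * (∑ β, y β * lowerY F₁ β x y)) := by
          rw [double_sum_sub, double_sum_prod]
      _ = _ := by rw [eulerQ hF₁ hx hy, lY_contract hF₁ hx hy]
  have hH1pos : (0:ℝ) < ∑ α, ∑ β, y α * y β *
      angular (twisted F₁ F₂ f) (Sum.inl α) (Sum.inl β) (Sum.elim x u) (Sum.elim y v) := by
    rw [hH1, hFsq]
    have hval : (F₁ x y)^2
        - ((F₁ x y)^2 + (f x u)^2 * (F₂ u v)^2)⁻¹ * ((F₁ x y)^2 * (F₁ x y)^2)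
        = (F₁ x y)^2 * ((f x u)^2 * (F₂ u v)^2) / ((F₁ x y)^2 + (f x u)^2 * (F₂ u v)^2) := by
      field_simp
      ring
    rw [hval]
    positivity
  -- first contraction: p * I_(inl α) * H₂ = 0
  have key1 : ∀ α : Fin n₁,
      p (Sum.elim x u) (Sum.elim y v) / (((n₁ : ℝ) + (n₂ : ℝ)) + 1)
        * meanCartan (twisted F₁ F₂ f) (Sum.inl α) (Sum.elim x u) (Sum.elim y v)
        * (∑ s, ∑ t, v s * v t *
            angular (twisted F₁ F₂ f) (Sum.inr s) (Sum.inr t) (Sum.elim x u) (Sum.elim y v))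
      = 0 := by
    intro α
    have h0 : ∑ s, ∑ t, v s * v t *
        cartan (twisted F₁ F₂ f) (Sum.inl α) (Sum.inr s) (Sum.inr t) (Sum.elim x u) (Sum.elim y v)
        = 0 :=
      Finset.sum_eq_zero fun s _ => Finset.sum_eq_zero fun t _ => by
        rw [cartan_twisted_lr hF₁ hF₂ hx hu α s (Sum.inr t) hY, mul_zero]
    simp only [hsem] at h0
    rw [contract_identity _ _ _ v
      (fun s => meanCartan (twisted F₁ F₂ f) (Sum.inr s) (Sum.elim x u) (Sum.elim y v))
      (fun t => angular (twisted F₁ F₂ f) (Sum.inl α) (Sum.inr t) (Sum.elim x u) (Sum.elim y v))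
      (fun s t => angular (twisted F₁ F₂ f) (Sum.inr s) (Sum.inr t) (Sum.elim x u) (Sum.elim y v))
      (K_zero hF₁ hF₂ hx hu hy hv hfne)] at h0
    exact h0
  -- second contraction: p * I_(inr s) * H₁ = 0
  have key2 : ∀ s : Fin n₂,
      p (Sum.elim x u) (Sum.elim y v) / (((n₁ : ℝ) + (n₂ : ℝ)) + 1)
        * meanCartan (twisted F₁ F₂ f) (Sum.inr s) (Sum.elim x u) (Sum.elim y v)
        * (∑ α, ∑ β, y α * y β *
            angular (twisted F₁ F₂ f) (Sum.inl α) (Sum.inl β) (Sum.elim x u) (Sum.elim y v))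
      = 0 := by
    intro s
    have h0 : ∑ α, ∑ β, y α * y β *
        cartan (twisted F₁ F₂ f) (Sum.inr s) (Sum.inl α) (Sum.inl β) (Sum.elim x u) (Sum.elim y v)
        = 0 :=
      Finset.sum_eq_zero fun α _ => Finset.sum_eq_zero fun β _ => by
        rw [cartan_twisted_rl hF₁ hF₂ hx hu s α (Sum.inl β) hY, mul_zero]
    simp only [hsem] at h0
    rw [contract_identity _ _ _ y
      (fun α => meanCartan (twisted F₁ F₂ f) (Sum.inl α) (Sum.elim x u) (Sum.elim y v))
      (fun β => angular (twisted F₁ F₂ f) (Sum.inr s) (Sum.inl β) (Sum.elim x u) (Sum.elim y v))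
      (fun α β => angular (twisted F₁ F₂ f) (Sum.inl α) (Sum.inl β) (Sum.elim x u) (Sum.elim y v))
      (L_zero hF₁ hF₂ hx hu hy hv hfne)] at h0
    exact h0
  have hD : (((n₁ : ℝ) + (n₂ : ℝ)) + 1) ≠ 0 := by positivity
  have hp0 : p (Sum.elim x u) (Sum.elim y v) = 0 := by
    by_contra hp
    have hPne : p (Sum.elim x u) (Sum.elim y v) / (((n₁ : ℝ) + (n₂ : ℝ)) + 1) ≠ 0 :=
      div_ne_zero hp hD
    have hIz : ∀ a : Fin n₁ ⊕ Fin n₂,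
        meanCartan (twisted F₁ F₂ f) a (Sum.elim x u) (Sum.elim y v) = 0 := by
      intro a
      rcases a with α | s
      · have h := key1 α
        rcases mul_eq_zero.1 h with h' | h'
        · rcases mul_eq_zero.1 h' with h'' | h''
          · exact absurd h'' hPne
          · exact h''
        · exact absurd h' (ne_of_gt hH2pos)
      · have h := key2 s
        rcases mul_eq_zero.1 h with h' | h'
        · rcases mul_eq_zero.1 h' with h'' | h''
          · exact absurd h'' hPne
          · exact h''
        · exact absurd h' (ne_of_gt hH1pos)
    have : meanCartanNormSq (twisted F₁ F₂ f) (Sum.elim x u) (Sum.elim y v) = 0 := by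
      unfold meanCartanNormSq
      simp [hIz]
    exact hC2 this
  have hq1' : q (Sum.elim x u) (Sum.elim y v) = 1 := by
    have := hpq x hx u hu y v hy hv
    rw [hp0] at this
    linarith
  refine ⟨hp0, ?_⟩
  intro a b c
  rw [hsem a b c, hp0, hq1', zero_div, zero_mul, zero_add, one_div]
end

section
/- A twisted product Finsler metric F is locally dually flat (in the given coordinates) if and only if F₁ and F₂ satisfy the two equations: (∂²F₁²/∂x^k∂y^l) y^k = 2 ∂F₁²/∂x^l + 4 f f_l F₂² for all l, and 4 f_k v_β y^k + f (∂²F₂²/∂u^α∂v^β) v^α + 4 f_α v_β v^α = 2 f ∂F₂²/∂u^β + 4 f_β F₂² for all β, where f_k := ∂f/∂x^k, f_α := ∂f/∂u^α and v_β := g_{βγ} v^γ. -/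
open scoped BigOperators

set_option linter.unusedSectionVars false

noncomputable section AuxTP

section Gen
variable {E F : Type*} [NormedAddCommGroup E] [NormedSpace ℝ E]
  [NormedAddCommGroup F] [NormedSpace ℝ F]

theorem fderiv_comp_fst (g : E × F → ℝ) {x : E} {y : F}
    (h : DifferentiableAt ℝ g (x, y)) (w : E) :
    fderiv ℝ (fun x' => g (x', y)) x w = fderiv ℝ g (x, y) (w, 0) := by
  have h1 : HasFDerivAt (fun x' : E => (x', y)) (ContinuousLinearMap.inl ℝ E F) x :=
    hasFDerivAt_prodMk_left x y
  have h2 : HasFDerivAt (fun x' => g (x', y))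
      ((fderiv ℝ g (x, y)).comp (ContinuousLinearMap.inl ℝ E F)) x :=
    h.hasFDerivAt.comp x h1
  rw [h2.fderiv]; rfl

theorem fderiv_comp_snd (g : E × F → ℝ) {x : E} {y : F}
    (h : DifferentiableAt ℝ g (x, y)) (w : F) :
    fderiv ℝ (fun y' => g (x, y')) y w = fderiv ℝ g (x, y) (0, w) := by
  have h1 : HasFDerivAt (fun y' : F => (x, y')) (ContinuousLinearMap.inr ℝ E F) y :=
    hasFDerivAt_prodMk_right x y
  have h2 : HasFDerivAt (fun y' => g (x, y'))
      ((fderiv ℝ g (x, y)).comp (ContinuousLinearMap.inr ℝ E F)) y :=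
    h.hasFDerivAt.comp y h1
  rw [h2.fderiv]; rfl

theorem fderiv_fderiv_apply (g : E × F → ℝ) {p : E × F}
    (h : DifferentiableAt ℝ (fderiv ℝ g) p) (w w₀ : E × F) :
    fderiv ℝ (fun q => fderiv ℝ g q w₀) p w = fderiv ℝ (fderiv ℝ g) p w w₀ := by
  rw [fderiv_clm_apply h (differentiableAt_const _)]
  simp

end Gen

section GenPi
variable {ι κ : Type*} [Fintype ι] [DecidableEq ι] [Fintype κ] [DecidableEq κ]
variable {φ : (ι → ℝ) → (κ → ℝ) → ℝ} {s : Set ((ι → ℝ) × (κ → ℝ))}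
  {x : ι → ℝ} {y : κ → ℝ}

theorem pdx_eq (h : DifferentiableAt ℝ (fun p : (ι→ℝ)×(κ→ℝ) => φ p.1 p.2) (x,y)) (i : ι) :
    pdx i φ x y = fderiv ℝ (fun p : (ι→ℝ)×(κ→ℝ) => φ p.1 p.2) (x,y) (Pi.single i 1, 0) := by
  unfold pdx
  exact fderiv_comp_fst _ h _

theorem pdy_eq (h : DifferentiableAt ℝ (fun p : (ι→ℝ)×(κ→ℝ) => φ p.1 p.2) (x,y)) (j : κ) :
    pdy j φ x y = fderiv ℝ (fun p : (ι→ℝ)×(κ→ℝ) => φ p.1 p.2) (x,y) (0, Pi.single j 1) := by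
  unfold pdy
  exact fderiv_comp_snd _ h _

theorem pdx_pdy_eq (hs : IsOpen s)
    (hg : ContDiffOn ℝ 2 (fun p : (ι→ℝ)×(κ→ℝ) => φ p.1 p.2) s) (hxy : (x,y) ∈ s) (i : ι) (j : κ) :
    pdx i (pdy j φ) x y
      = fderiv ℝ (fun q => fderiv ℝ (fun p : (ι→ℝ)×(κ→ℝ) => φ p.1 p.2) q (0, Pi.single j 1))
          (x,y) (Pi.single i 1, 0) := by
  set g : (ι→ℝ)×(κ→ℝ) → ℝ := fun p => φ p.1 p.2 with hgdef
  have hΦd : DifferentiableAt ℝ (fun q => fderiv ℝ g q (0, Pi.single j 1)) (x,y) := by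
    have h1 : ContDiffAt ℝ 1 (fderiv ℝ g) (x,y) :=
      (hg.contDiffAt (hs.mem_nhds hxy)).fderiv_right (by norm_num)
    exact (h1.differentiableAt (by norm_num)).clm_apply (differentiableAt_const _)
  have hev : (fun x' => pdy j φ x' y) =ᶠ[nhds x]
      (fun x' => fderiv ℝ g (x', y) (0, Pi.single j 1)) := by
    have ho : IsOpen {x' : ι→ℝ | (x', y) ∈ s} :=
      hs.preimage (Continuous.prodMk continuous_id continuous_const)
    filter_upwards [ho.mem_nhds hxy] with x' hx'
    exact pdy_eq ((hg.contDiffAt (hs.mem_nhds hx')).differentiableAt (by norm_num)) j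
  unfold pdx
  rw [hev.fderiv_eq]
  exact fderiv_comp_fst _ hΦd _

theorem pdy_pdy_eq (hs : IsOpen s)
    (hg : ContDiffOn ℝ 2 (fun p : (ι→ℝ)×(κ→ℝ) => φ p.1 p.2) s) (hxy : (x,y) ∈ s) (i : κ) (j : κ) :
    pdy i (pdy j φ) x y
      = fderiv ℝ (fun q => fderiv ℝ (fun p : (ι→ℝ)×(κ→ℝ) => φ p.1 p.2) q (0, Pi.single j 1))
          (x,y) (0, Pi.single i 1) := by
  set g : (ι→ℝ)×(κ→ℝ) → ℝ := fun p => φ p.1 p.2 with hgdef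
  have hΦd : DifferentiableAt ℝ (fun q => fderiv ℝ g q (0, Pi.single j 1)) (x,y) := by
    have h1 : ContDiffAt ℝ 1 (fderiv ℝ g) (x,y) :=
      (hg.contDiffAt (hs.mem_nhds hxy)).fderiv_right (by norm_num)
    exact (h1.differentiableAt (by norm_num)).clm_apply (differentiableAt_const _)
  have hev : (fun y' => pdy j φ x y') =ᶠ[nhds y]
      (fun y' => fderiv ℝ g (x, y') (0, Pi.single j 1)) := by
    have ho : IsOpen {y' : κ→ℝ | (x, y') ∈ s} :=
      hs.preimage (Continuous.prodMk continuous_const continuous_id)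
    filter_upwards [ho.mem_nhds hxy] with y' hy'
    exact pdy_eq ((hg.contDiffAt (hs.mem_nhds hy')).differentiableAt (by norm_num)) j
  rw [show pdy i (pdy j φ) x y = fderiv ℝ (fun y' => pdy j φ x y') y (Pi.single i 1) from rfl]
  rw [hev.fderiv_eq]
  exact fderiv_comp_snd _ hΦd _

end GenPi

section Euler
variable {κ : Type*} [Fintype κ] [DecidableEq κ]

theorem euler_pdy {U : Set (κ → ℝ)} {F : (κ → ℝ) → (κ → ℝ) → ℝ}
    (hF : IsFinslerMetric U F) {u v : κ → ℝ} (hu : u ∈ U) (hv : v ≠ 0) (β : κ) :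
    pdy β (fun a b => (F a b)^2) u v = 2 * lowerY F β u v := by
  classical
  have hsc : IsOpen (U ×ˢ {y : κ → ℝ | y ≠ 0}) := hF.isOpen.prod isOpen_ne
  have hmem : ((u,v) : (κ→ℝ)×(κ→ℝ)) ∈ U ×ˢ {y : κ → ℝ | y ≠ 0} := ⟨hu, hv⟩
  have hgtop : ContDiffOn ℝ (⊤ : ℕ∞) (fun q : (κ→ℝ)×(κ→ℝ) => (F q.1 q.2)^2)
      (U ×ˢ {y : κ → ℝ | y ≠ 0}) := hF.smooth.pow 2
  have hgc2 : ContDiffOn ℝ 2 (fun q : (κ→ℝ)×(κ→ℝ) => (F q.1 q.2)^2)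
      (U ×ˢ {y : κ → ℝ | y ≠ 0}) := hgtop.of_le (WithTop.coe_le_coe.mpr le_top)
  set gc : (κ→ℝ)×(κ→ℝ) → ℝ := fun q => (F q.1 q.2)^2 with hgc_def
  have hcd : ∀ q ∈ U ×ˢ {y : κ → ℝ | y ≠ 0}, DifferentiableAt ℝ gc q := fun q hq =>
    (hgc2.contDiffAt (hsc.mem_nhds hq)).differentiableAt (by norm_num)
  have hpd : DifferentiableAt ℝ (fderiv ℝ gc) (u,v) := by
    have h1 : ContDiffAt ℝ 1 (fderiv ℝ gc) (u,v) :=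
      (hgc2.contDiffAt (hsc.mem_nhds hmem)).fderiv_right (by norm_num)
    exact h1.differentiableAt (by norm_num)
  have hsym : IsSymmSndFDerivAt ℝ gc (u,v) :=
    (hgtop.contDiffAt (hsc.mem_nhds hmem)).isSymmSndFDerivAt (by rw [minSmoothness_of_isRCLikeNormedField]; exact WithTop.coe_le_coe.mpr le_top)
  set Φ : (κ→ℝ)×(κ→ℝ) → ℝ := fun q => fderiv ℝ gc q (0, Pi.single β 1) with hΦ_def
  have hΦdiff : DifferentiableAt ℝ Φ (u,v) := hpd.clm_apply (differentiableAt_const _)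
  -- homogeneity of Φ along the ray
  have hhom : ∀ t : ℝ, 0 < t → Φ (u, t • v) = t * Φ (u, v) := by
    intro t ht
    set St : ((κ→ℝ)×(κ→ℝ)) →L[ℝ] ((κ→ℝ)×(κ→ℝ)) :=
      (ContinuousLinearMap.fst ℝ _ _).prod (t • ContinuousLinearMap.snd ℝ _ _) with hSt_def
    have hStapp : ∀ q : (κ→ℝ)×(κ→ℝ), St q = (q.1, t • q.2) := fun q => rfl
    have hgc_eq : (fun q => gc (St q)) =ᶠ[nhds ((u,v) : (κ→ℝ)×(κ→ℝ))]
        (fun q => t^2 * gc q) := by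
      have ho : IsOpen (U ×ˢ (Set.univ : Set (κ→ℝ))) := hF.isOpen.prod isOpen_univ
      filter_upwards [ho.mem_nhds ⟨hu, trivial⟩] with q hq
      have hh := hF.homog q.1 hq.1 q.2 t ht
      show (F (q.1) (t • q.2))^2 = t^2 * (F q.1 q.2)^2
      rw [hh]; ring
    have htv : ((u, t • v) : (κ→ℝ)×(κ→ℝ)) ∈ U ×ˢ {y : κ → ℝ | y ≠ 0} :=
      ⟨hu, smul_ne_zero (ne_of_gt ht) hv⟩
    have hd1 : DifferentiableAt ℝ gc ((u, t • v) : (κ→ℝ)×(κ→ℝ)) := hcd _ htv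
    have hchain : HasFDerivAt (fun q => gc (St q))
        ((fderiv ℝ gc ((u, t • v) : (κ→ℝ)×(κ→ℝ))).comp St) (u,v) :=
      by have := hd1.hasFDerivAt.comp (u,v) St.hasFDerivAt; exact this
    have heq2 : fderiv ℝ (fun q => t^2 * gc q) (u,v) = t^2 • fderiv ℝ gc (u,v) :=
      fderiv_const_mul (hcd _ hmem) (t^2)
    have heq3 := hgc_eq.fderiv_eq (𝕜 := ℝ)
    rw [hchain.fderiv, heq2] at heq3
    have hkey : (fderiv ℝ gc ((u, t • v) : (κ→ℝ)×(κ→ℝ))) ((0:κ→ℝ), t • (Pi.single β 1 : κ→ℝ))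
        = t^2 * Φ (u,v) := by
      have h4 := congrArg (fun L : ((κ→ℝ)×(κ→ℝ)) →L[ℝ] ℝ => L ((0:κ→ℝ), Pi.single β 1)) heq3
      simpa [hStapp, hΦ_def] using h4
    have hsmul : (((0:κ→ℝ), t • (Pi.single β 1 : κ→ℝ)) : (κ→ℝ)×(κ→ℝ))
        = t • (((0:κ→ℝ), (Pi.single β 1 : κ→ℝ)) : (κ→ℝ)×(κ→ℝ)) := by
      rw [Prod.smul_mk, smul_zero]
    have hthis : t * Φ (u, t • v) = t^2 * Φ (u,v) := by
      rw [← hkey, hsmul, map_smul, smul_eq_mul]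
    exact mul_left_cancel₀ (ne_of_gt ht) (hthis.trans (by ring))
  -- Euler identity for Φ
  have heuler : fderiv ℝ Φ (u,v) ((0 : κ→ℝ), v) = Φ (u,v) := by
    have h1 : HasDerivAt (fun t : ℝ => t • v) v 1 := by
      simpa using (hasDerivAt_id (1:ℝ)).smul_const v
    have hγ : HasDerivAt (fun t : ℝ => ((u, t • v) : (κ→ℝ)×(κ→ℝ))) ((0 : κ→ℝ), v) 1 :=
      (hasDerivAt_const 1 u).prodMk h1
    have hΦ1 : DifferentiableAt ℝ Φ ((u, (1:ℝ) • v) : (κ→ℝ)×(κ→ℝ)) := by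
      simpa using hΦdiff
    have hcomp : HasDerivAt (fun t : ℝ => Φ (u, t • v)) (fderiv ℝ Φ (u, (1:ℝ) • v) ((0:κ→ℝ), v)) 1 :=
      by have := hΦ1.hasFDerivAt.comp_hasDerivAt 1 hγ; exact this
    have hcomp' : HasDerivAt (fun t : ℝ => Φ (u, t • v)) (fderiv ℝ Φ (u, v) ((0:κ→ℝ), v)) 1 := by
      simpa using hcomp
    have hev : (fun t : ℝ => t * Φ (u,v)) =ᶠ[nhds (1:ℝ)] (fun t : ℝ => Φ (u, t • v)) := by
      filter_upwards [isOpen_Ioi.mem_nhds (by norm_num : (1:ℝ) ∈ Set.Ioi (0:ℝ))] with t ht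
      exact (hhom t ht).symm
    have hlin : HasDerivAt (fun t : ℝ => t * Φ (u,v)) (fderiv ℝ Φ (u, v) ((0:κ→ℝ), v)) 1 :=
      hcomp'.congr_of_eventuallyEq hev
    exact hlin.unique (hasDerivAt_mul_const _)
  -- decompose (0, v)
  have hv_decomp : (((0:κ→ℝ), v) : (κ→ℝ)×(κ→ℝ))
      = ∑ γ : κ, v γ • (((0:κ→ℝ), Pi.single γ 1) : (κ→ℝ)×(κ→ℝ)) := by
    have h2 : ∑ γ : κ, v γ • (Pi.single γ 1 : κ→ℝ) = v := by
      have := Finset.univ_sum_single v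
      rw [← this]
      exact Finset.sum_congr rfl fun γ _ => by
        rw [← Pi.single_smul]; simp
    apply Prod.ext
    · simp [Prod.fst_sum]
    · simp only [Prod.snd_sum, Prod.smul_mk]
      exact h2.symm
  -- lowerY computation
  have hmixed : ∀ γ : κ, pdy β (pdy γ (fun a b => (F a b)^2)) u v
      = fderiv ℝ (fderiv ℝ gc) (u,v) ((0:κ→ℝ), Pi.single γ 1) ((0:κ→ℝ), Pi.single β 1) := by
    intro γ
    rw [pdy_pdy_eq hsc hgc2 hmem β γ]
    rw [fderiv_fderiv_apply gc hpd]
    exact hsym _ _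
  have hLY : 2 * lowerY F β u v = fderiv ℝ Φ (u,v) ((0:κ→ℝ), v) := by
    unfold lowerY fTensor
    rw [fderiv_fderiv_apply gc hpd, hv_decomp, map_sum]
    rw [ContinuousLinearMap.sum_apply, Finset.mul_sum]
    apply Finset.sum_congr rfl
    intro γ _
    rw [ContinuousLinearMap.map_smul, ContinuousLinearMap.smul_apply, smul_eq_mul]
    rw [hmixed γ]
    ring
  have hpdyβ : pdy β (fun a b => (F a b)^2) u v = Φ (u,v) :=
    pdy_eq (hcd _ hmem) β
  rw [hpdyβ, hLY, heuler]

end Euler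

end AuxTP
noncomputable section Twist
variable {n₁ n₂ : ℕ}

def tpinl : ((Fin n₁ ⊕ Fin n₂) → ℝ) →L[ℝ] (Fin n₁ → ℝ) :=
  ContinuousLinearMap.pi fun i => ContinuousLinearMap.proj (Sum.inl i)
def tpinr : ((Fin n₁ ⊕ Fin n₂) → ℝ) →L[ℝ] (Fin n₂ → ℝ) :=
  ContinuousLinearMap.pi fun i => ContinuousLinearMap.proj (Sum.inr i)

@[simp] theorem tpinl_apply (X : (Fin n₁ ⊕ Fin n₂) → ℝ) (i : Fin n₁) :
    tpinl X i = X (Sum.inl i) := rfl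
@[simp] theorem tpinr_apply (X : (Fin n₁ ⊕ Fin n₂) → ℝ) (i : Fin n₂) :
    tpinr X i = X (Sum.inr i) := rfl
@[simp] theorem tpinl_elim (x : Fin n₁ → ℝ) (u : Fin n₂ → ℝ) : tpinl (Sum.elim x u) = x := rfl
@[simp] theorem tpinr_elim (x : Fin n₁ → ℝ) (u : Fin n₂ → ℝ) : tpinr (Sum.elim x u) = u := rfl
@[simp] theorem tpinl_single_inl (k : Fin n₁) :
    tpinl (n₂ := n₂) (Pi.single (Sum.inl k) 1) = Pi.single k 1 := by
  funext i; rw [tpinl_apply]; simp [Pi.single_apply]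
@[simp] theorem tpinl_single_inr (α : Fin n₂) :
    tpinl (n₁ := n₁) (Pi.single (Sum.inr α) 1) = 0 := by
  funext i; rw [tpinl_apply]; simp [Pi.single_apply]
@[simp] theorem tpinr_single_inl (k : Fin n₁) :
    tpinr (n₂ := n₂) (Pi.single (Sum.inl k) 1) = 0 := by
  funext i; rw [tpinr_apply]; simp [Pi.single_apply]
@[simp] theorem tpinr_single_inr (α : Fin n₂) :
    tpinr (n₁ := n₁) (Pi.single (Sum.inr α) 1) = Pi.single α 1 := by
  funext i; rw [tpinr_apply]; simp [Pi.single_apply]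

def tpT1 : (((Fin n₁ ⊕ Fin n₂) → ℝ) × ((Fin n₁ ⊕ Fin n₂) → ℝ)) →L[ℝ]
    ((Fin n₁ → ℝ) × (Fin n₁ → ℝ)) :=
  (tpinl.comp (ContinuousLinearMap.fst ℝ _ _)).prod (tpinl.comp (ContinuousLinearMap.snd ℝ _ _))
def tpT2 : (((Fin n₁ ⊕ Fin n₂) → ℝ) × ((Fin n₁ ⊕ Fin n₂) → ℝ)) →L[ℝ]
    ((Fin n₂ → ℝ) × (Fin n₂ → ℝ)) :=
  (tpinr.comp (ContinuousLinearMap.fst ℝ _ _)).prod (tpinr.comp (ContinuousLinearMap.snd ℝ _ _))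
def tpTf : (((Fin n₁ ⊕ Fin n₂) → ℝ) × ((Fin n₁ ⊕ Fin n₂) → ℝ)) →L[ℝ]
    ((Fin n₁ → ℝ) × (Fin n₂ → ℝ)) :=
  (tpinl.comp (ContinuousLinearMap.fst ℝ _ _)).prod (tpinr.comp (ContinuousLinearMap.fst ℝ _ _))

@[simp] theorem tpT1_apply (p : ((Fin n₁ ⊕ Fin n₂) → ℝ) × ((Fin n₁ ⊕ Fin n₂) → ℝ)) :
    tpT1 p = (tpinl p.1, tpinl p.2) := rfl
@[simp] theorem tpT2_apply (p : ((Fin n₁ ⊕ Fin n₂) → ℝ) × ((Fin n₁ ⊕ Fin n₂) → ℝ)) :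
    tpT2 p = (tpinr p.1, tpinr p.2) := rfl
@[simp] theorem tpTf_apply (p : ((Fin n₁ ⊕ Fin n₂) → ℝ) × ((Fin n₁ ⊕ Fin n₂) → ℝ)) :
    tpTf p = (tpinl p.1, tpinr p.1) := rfl

def tpQ (F₁ : (Fin n₁ → ℝ) → (Fin n₁ → ℝ) → ℝ) (F₂ : (Fin n₂ → ℝ) → (Fin n₂ → ℝ) → ℝ)
    (f : (Fin n₁ → ℝ) → (Fin n₂ → ℝ) → ℝ) :
    (((Fin n₁ ⊕ Fin n₂) → ℝ) × ((Fin n₁ ⊕ Fin n₂) → ℝ)) → ℝ := fun p =>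
  (F₁ (tpinl p.1) (tpinl p.2))^2
    + (f (tpinl p.1) (tpinr p.1) * f (tpinl p.1) (tpinr p.1)) * (F₂ (tpinr p.1) (tpinr p.2))^2

def tpΩ (U₁ : Set (Fin n₁ → ℝ)) (U₂ : Set (Fin n₂ → ℝ)) :
    Set (((Fin n₁ ⊕ Fin n₂) → ℝ) × ((Fin n₁ ⊕ Fin n₂) → ℝ)) :=
  {p | tpinl p.1 ∈ U₁ ∧ tpinr p.1 ∈ U₂ ∧ tpinl p.2 ≠ 0 ∧ tpinr p.2 ≠ 0}

variable {U₁ : Set (Fin n₁ → ℝ)} {U₂ : Set (Fin n₂ → ℝ)}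
    {F₁ : (Fin n₁ → ℝ) → (Fin n₁ → ℝ) → ℝ} {F₂ : (Fin n₂ → ℝ) → (Fin n₂ → ℝ) → ℝ}
    {f : (Fin n₁ → ℝ) → (Fin n₂ → ℝ) → ℝ}

theorem tpΩ_isOpen (h₁ : IsOpen U₁) (h₂ : IsOpen U₂) :
    IsOpen (tpΩ (n₁ := n₁) (n₂ := n₂) U₁ U₂) := by
  have e : tpΩ (n₁ := n₁) (n₂ := n₂) U₁ U₂
      = ((fun p : ((Fin n₁ ⊕ Fin n₂) → ℝ) × ((Fin n₁ ⊕ Fin n₂) → ℝ) => tpinl p.1) ⁻¹' U₁)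
        ∩ ((fun p : ((Fin n₁ ⊕ Fin n₂) → ℝ) × ((Fin n₁ ⊕ Fin n₂) → ℝ) => tpinr p.1) ⁻¹' U₂)
        ∩ ((fun p : ((Fin n₁ ⊕ Fin n₂) → ℝ) × ((Fin n₁ ⊕ Fin n₂) → ℝ) => tpinl p.2) ⁻¹' {y | y ≠ 0})
        ∩ ((fun p : ((Fin n₁ ⊕ Fin n₂) → ℝ) × ((Fin n₁ ⊕ Fin n₂) → ℝ) => tpinr p.2) ⁻¹' {y | y ≠ 0}) := by
    ext p; simp [tpΩ]; tauto
  rw [e]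
  exact (((h₁.preimage (tpinl.continuous.comp continuous_fst)).inter
      (h₂.preimage (tpinr.continuous.comp continuous_fst))).inter
      (isOpen_ne.preimage (tpinl.continuous.comp continuous_snd))).inter
      (isOpen_ne.preimage (tpinr.continuous.comp continuous_snd))

variable (hF₁ : IsFinslerMetric U₁ F₁) (hF₂ : IsFinslerMetric U₂ F₂)
    (hf : ContDiffOn ℝ (⊤ : ℕ∞) (fun p : (Fin n₁ → ℝ) × (Fin n₂ → ℝ) => f p.1 p.2) (U₁ ×ˢ U₂))

section
include hF₁ hF₂ hf

theorem tpQ_contDiffOn : ContDiffOn ℝ 2 (tpQ F₁ F₂ f) (tpΩ U₁ U₂) := by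
  have ha : ContDiffOn ℝ 2 (fun q : (Fin n₁→ℝ)×(Fin n₁→ℝ) => (F₁ q.1 q.2)^2)
      (U₁ ×ˢ {y | y ≠ 0}) := (hF₁.smooth.pow 2).of_le (WithTop.coe_le_coe.mpr le_top)
  have hc : ContDiffOn ℝ 2 (fun q : (Fin n₂→ℝ)×(Fin n₂→ℝ) => (F₂ q.1 q.2)^2)
      (U₂ ×ˢ {y | y ≠ 0}) := (hF₂.smooth.pow 2).of_le (WithTop.coe_le_coe.mpr le_top)
  have hb : ContDiffOn ℝ 2 (fun q : (Fin n₁→ℝ)×(Fin n₂→ℝ) => f q.1 q.2) (U₁ ×ˢ U₂) :=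
    hf.of_le (WithTop.coe_le_coe.mpr le_top)
  have hA : ContDiffOn ℝ 2 (fun p => (F₁ (tpinl p.1) (tpinl p.2))^2) (tpΩ U₁ U₂) := by
    refine ha.comp (tpT1.contDiff.contDiffOn) ?_
    intro p hp
    exact ⟨hp.1, hp.2.2.1⟩
  have hB : ContDiffOn ℝ 2 (fun p => f (tpinl p.1) (tpinr p.1)) (tpΩ U₁ U₂) := by
    refine hb.comp (tpTf.contDiff.contDiffOn) ?_
    intro p hp
    exact ⟨hp.1, hp.2.1⟩
  have hC : ContDiffOn ℝ 2 (fun p => (F₂ (tpinr p.1) (tpinr p.2))^2) (tpΩ U₁ U₂) := by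
    refine hc.comp (tpT2.contDiff.contDiffOn) ?_
    intro p hp
    exact ⟨hp.2.1, hp.2.2.2⟩
  exact hA.add ((hB.mul hB).mul hC)

theorem tpDQ {p : ((Fin n₁ ⊕ Fin n₂) → ℝ) × ((Fin n₁ ⊕ Fin n₂) → ℝ)}
    (hp : p ∈ tpΩ U₁ U₂) (w : ((Fin n₁ ⊕ Fin n₂) → ℝ) × ((Fin n₁ ⊕ Fin n₂) → ℝ)) :
    fderiv ℝ (tpQ F₁ F₂ f) p w
      = fderiv ℝ (fun q : (Fin n₁→ℝ)×(Fin n₁→ℝ) => (F₁ q.1 q.2)^2)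
          (tpinl p.1, tpinl p.2) (tpinl w.1, tpinl w.2)
        + 2 * f (tpinl p.1) (tpinr p.1)
          * fderiv ℝ (fun q : (Fin n₁→ℝ)×(Fin n₂→ℝ) => f q.1 q.2)
              (tpinl p.1, tpinr p.1) (tpinl w.1, tpinr w.1)
          * (F₂ (tpinr p.1) (tpinr p.2))^2
        + f (tpinl p.1) (tpinr p.1) * f (tpinl p.1) (tpinr p.1)
          * fderiv ℝ (fun q : (Fin n₂→ℝ)×(Fin n₂→ℝ) => (F₂ q.1 q.2)^2)
              (tpinr p.1, tpinr p.2) (tpinr w.1, tpinr w.2) := by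
  have hsa : IsOpen (U₁ ×ˢ {y : Fin n₁ → ℝ | y ≠ 0}) := hF₁.isOpen.prod isOpen_ne
  have hsc : IsOpen (U₂ ×ˢ {y : Fin n₂ → ℝ | y ≠ 0}) := hF₂.isOpen.prod isOpen_ne
  have hsb : IsOpen (U₁ ×ˢ U₂) := hF₁.isOpen.prod hF₂.isOpen
  have ha : ContDiffOn ℝ 2 (fun q : (Fin n₁→ℝ)×(Fin n₁→ℝ) => (F₁ q.1 q.2)^2)
      (U₁ ×ˢ {y | y ≠ 0}) := (hF₁.smooth.pow 2).of_le (WithTop.coe_le_coe.mpr le_top)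
  have hc : ContDiffOn ℝ 2 (fun q : (Fin n₂→ℝ)×(Fin n₂→ℝ) => (F₂ q.1 q.2)^2)
      (U₂ ×ˢ {y | y ≠ 0}) := (hF₂.smooth.pow 2).of_le (WithTop.coe_le_coe.mpr le_top)
  have hb : ContDiffOn ℝ 2 (fun q : (Fin n₁→ℝ)×(Fin n₂→ℝ) => f q.1 q.2) (U₁ ×ˢ U₂) :=
    hf.of_le (WithTop.coe_le_coe.mpr le_top)
  have haD : DifferentiableAt ℝ (fun q : (Fin n₁→ℝ)×(Fin n₁→ℝ) => (F₁ q.1 q.2)^2)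
      ((tpinl p.1, tpinl p.2)) :=
    (ha.contDiffAt (hsa.mem_nhds (show (tpinl p.1, tpinl p.2) ∈ U₁ ×ˢ {y : Fin n₁ → ℝ | y ≠ 0} from ⟨hp.1, hp.2.2.1⟩))).differentiableAt (by norm_num)
  have hbD : DifferentiableAt ℝ (fun q : (Fin n₁→ℝ)×(Fin n₂→ℝ) => f q.1 q.2)
      ((tpinl p.1, tpinr p.1)) :=
    (hb.contDiffAt (hsb.mem_nhds (show (tpinl p.1, tpinr p.1) ∈ U₁ ×ˢ U₂ from ⟨hp.1, hp.2.1⟩))).differentiableAt (by norm_num)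
  have hcD : DifferentiableAt ℝ (fun q : (Fin n₂→ℝ)×(Fin n₂→ℝ) => (F₂ q.1 q.2)^2)
      ((tpinr p.1, tpinr p.2)) :=
    (hc.contDiffAt (hsc.mem_nhds (show (tpinr p.1, tpinr p.2) ∈ U₂ ×ˢ {y : Fin n₂ → ℝ | y ≠ 0} from ⟨hp.2.1, hp.2.2.2⟩))).differentiableAt (by norm_num)
  have h1 : HasFDerivAt (fun p' => (F₁ (tpinl p'.1) (tpinl p'.2))^2)
      ((fderiv ℝ (fun q : (Fin n₁→ℝ)×(Fin n₁→ℝ) => (F₁ q.1 q.2)^2)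
        (tpinl p.1, tpinl p.2)).comp tpT1) p :=
    by have := haD.hasFDerivAt.comp p tpT1.hasFDerivAt; exact this
  have h2 : HasFDerivAt (fun p' => f (tpinl p'.1) (tpinr p'.1))
      ((fderiv ℝ (fun q : (Fin n₁→ℝ)×(Fin n₂→ℝ) => f q.1 q.2)
        (tpinl p.1, tpinr p.1)).comp tpTf) p :=
    by have := hbD.hasFDerivAt.comp p tpTf.hasFDerivAt; exact this
  have h3 : HasFDerivAt (fun p' => (F₂ (tpinr p'.1) (tpinr p'.2))^2)
      ((fderiv ℝ (fun q : (Fin n₂→ℝ)×(Fin n₂→ℝ) => (F₂ q.1 q.2)^2)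
        (tpinr p.1, tpinr p.2)).comp tpT2) p :=
    by have := hcD.hasFDerivAt.comp p tpT2.hasFDerivAt; exact this
  have h4 := h1.add ((h2.mul h2).mul h3)
  have h5 : HasFDerivAt (tpQ F₁ F₂ f) _ p := h4
  rw [h5.fderiv]
  simp only [ContinuousLinearMap.add_apply, ContinuousLinearMap.coe_comp',
    Function.comp_apply, ContinuousLinearMap.smul_apply, smul_eq_mul,
    tpT1_apply, tpT2_apply, tpTf_apply, map_zero, Pi.mul_apply]
  ring

theorem tpQ_diffAt {p : ((Fin n₁ ⊕ Fin n₂) → ℝ) × ((Fin n₁ ⊕ Fin n₂) → ℝ)}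
    (hp : p ∈ tpΩ U₁ U₂) : DifferentiableAt ℝ (tpQ F₁ F₂ f) p :=
  ((tpQ_contDiffOn hF₁ hF₂ hf).contDiffAt
    ((tpΩ_isOpen hF₁.isOpen hF₂.isOpen).mem_nhds hp)).differentiableAt (by norm_num)

theorem tp_mixed_inl {X Y : (Fin n₁ ⊕ Fin n₂) → ℝ}
    (hp : ((X, Y) : ((Fin n₁ ⊕ Fin n₂) → ℝ) × ((Fin n₁ ⊕ Fin n₂) → ℝ)) ∈ tpΩ U₁ U₂) (l : Fin n₁) (k' : Fin n₁ ⊕ Fin n₂) :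
    pdx k' (pdy (Sum.inl l) (fun X' Y' => tpQ F₁ F₂ f (X', Y'))) X Y
      = fderiv ℝ (fun q => fderiv ℝ (fun q' : (Fin n₁→ℝ)×(Fin n₁→ℝ) => (F₁ q'.1 q'.2)^2) q
            ((0 : Fin n₁→ℝ), Pi.single l 1))
          (tpinl X, tpinl Y) (tpinl (Pi.single k' 1), (0 : Fin n₁→ℝ)) := by
  have hΩo := tpΩ_isOpen (n₁ := n₁) (n₂ := n₂) hF₁.isOpen hF₂.isOpen
  have hQ2 := tpQ_contDiffOn hF₁ hF₂ hf
  have hsa : IsOpen (U₁ ×ˢ {y : Fin n₁ → ℝ | y ≠ 0}) := hF₁.isOpen.prod isOpen_ne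
  have ha : ContDiffOn ℝ 2 (fun q : (Fin n₁→ℝ)×(Fin n₁→ℝ) => (F₁ q.1 q.2)^2)
      (U₁ ×ˢ {y | y ≠ 0}) := (hF₁.smooth.pow 2).of_le (WithTop.coe_le_coe.mpr le_top)
  have h0 : pdx k' (pdy (Sum.inl l) (fun X' Y' => tpQ F₁ F₂ f (X', Y'))) X Y
      = fderiv ℝ (fun q => fderiv ℝ (tpQ F₁ F₂ f) q
            ((0 : (Fin n₁ ⊕ Fin n₂) → ℝ), Pi.single (Sum.inl l) 1)) (X, Y) (Pi.single k' 1, 0) :=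
    pdx_pdy_eq hΩo hQ2 hp k' (Sum.inl l)
  rw [h0]
  have hev : (fun q => fderiv ℝ (tpQ F₁ F₂ f) q
        ((0 : (Fin n₁ ⊕ Fin n₂) → ℝ), Pi.single (Sum.inl l) 1)) =ᶠ[nhds ((X, Y) : ((Fin n₁ ⊕ Fin n₂) → ℝ) × ((Fin n₁ ⊕ Fin n₂) → ℝ))]
      (fun q => fderiv ℝ (fun q' : (Fin n₁→ℝ)×(Fin n₁→ℝ) => (F₁ q'.1 q'.2)^2)
        (tpinl q.1, tpinl q.2) ((0 : Fin n₁→ℝ), Pi.single l 1)) := by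
    filter_upwards [hΩo.mem_nhds hp] with q hq
    rw [tpDQ hF₁ hF₂ hf hq]
    simp [Prod.mk_zero_zero]
  rw [hev.fderiv_eq (𝕜 := ℝ)]
  have hΦd : DifferentiableAt ℝ
      (fun q : (Fin n₁→ℝ)×(Fin n₁→ℝ) =>
        fderiv ℝ (fun q' : (Fin n₁→ℝ)×(Fin n₁→ℝ) => (F₁ q'.1 q'.2)^2) q
          ((0 : Fin n₁→ℝ), Pi.single l 1)) (tpinl X, tpinl Y) := by
    have h1 : ContDiffAt ℝ 1
        (fderiv ℝ (fun q' : (Fin n₁→ℝ)×(Fin n₁→ℝ) => (F₁ q'.1 q'.2)^2)) (tpinl X, tpinl Y) :=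
      (ha.contDiffAt (hsa.mem_nhds
        (show (tpinl X, tpinl Y) ∈ U₁ ×ˢ {y : Fin n₁ → ℝ | y ≠ 0}
          from ⟨hp.1, hp.2.2.1⟩))).fderiv_right (by norm_num)
    exact (h1.differentiableAt (by norm_num)).clm_apply (differentiableAt_const _)
  have h2 : HasFDerivAt
      (fun q => fderiv ℝ (fun q' : (Fin n₁→ℝ)×(Fin n₁→ℝ) => (F₁ q'.1 q'.2)^2)
        (tpinl q.1, tpinl q.2) ((0 : Fin n₁→ℝ), Pi.single l 1))
      ((fderiv ℝ (fun q : (Fin n₁→ℝ)×(Fin n₁→ℝ) =>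
          fderiv ℝ (fun q' : (Fin n₁→ℝ)×(Fin n₁→ℝ) => (F₁ q'.1 q'.2)^2) q
            ((0 : Fin n₁→ℝ), Pi.single l 1)) (tpinl X, tpinl Y)).comp tpT1) (X, Y) :=
    by have := hΦd.hasFDerivAt.comp (X, Y) tpT1.hasFDerivAt; exact this
  rw [h2.fderiv]
  simp

theorem tp_mixed_inr {X Y : (Fin n₁ ⊕ Fin n₂) → ℝ}
    (hp : ((X, Y) : ((Fin n₁ ⊕ Fin n₂) → ℝ) × ((Fin n₁ ⊕ Fin n₂) → ℝ)) ∈ tpΩ U₁ U₂) (β : Fin n₂) (k' : Fin n₁ ⊕ Fin n₂) :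
    pdx k' (pdy (Sum.inr β) (fun X' Y' => tpQ F₁ F₂ f (X', Y'))) X Y
      = 2 * f (tpinl X) (tpinr X)
          * fderiv ℝ (fun q : (Fin n₁→ℝ)×(Fin n₂→ℝ) => f q.1 q.2)
              (tpinl X, tpinr X) (tpinl (Pi.single k' 1), tpinr (Pi.single k' 1))
          * fderiv ℝ (fun q : (Fin n₂→ℝ)×(Fin n₂→ℝ) => (F₂ q.1 q.2)^2)
              (tpinr X, tpinr Y) ((0 : Fin n₂→ℝ), Pi.single β 1)
        + f (tpinl X) (tpinr X) * f (tpinl X) (tpinr X)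
          * fderiv ℝ (fun q => fderiv ℝ (fun q' : (Fin n₂→ℝ)×(Fin n₂→ℝ) => (F₂ q'.1 q'.2)^2) q
                ((0 : Fin n₂→ℝ), Pi.single β 1))
              (tpinr X, tpinr Y) (tpinr (Pi.single k' 1), (0 : Fin n₂→ℝ)) := by
  have hΩo := tpΩ_isOpen (n₁ := n₁) (n₂ := n₂) hF₁.isOpen hF₂.isOpen
  have hQ2 := tpQ_contDiffOn hF₁ hF₂ hf
  have hsc : IsOpen (U₂ ×ˢ {y : Fin n₂ → ℝ | y ≠ 0}) := hF₂.isOpen.prod isOpen_ne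
  have hsb : IsOpen (U₁ ×ˢ U₂) := hF₁.isOpen.prod hF₂.isOpen
  have hc : ContDiffOn ℝ 2 (fun q : (Fin n₂→ℝ)×(Fin n₂→ℝ) => (F₂ q.1 q.2)^2)
      (U₂ ×ˢ {y | y ≠ 0}) := (hF₂.smooth.pow 2).of_le (WithTop.coe_le_coe.mpr le_top)
  have hb : ContDiffOn ℝ 2 (fun q : (Fin n₁→ℝ)×(Fin n₂→ℝ) => f q.1 q.2) (U₁ ×ˢ U₂) :=
    hf.of_le (WithTop.coe_le_coe.mpr le_top)
  have h0 : pdx k' (pdy (Sum.inr β) (fun X' Y' => tpQ F₁ F₂ f (X', Y'))) X Y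
      = fderiv ℝ (fun q => fderiv ℝ (tpQ F₁ F₂ f) q
            ((0 : (Fin n₁ ⊕ Fin n₂) → ℝ), Pi.single (Sum.inr β) 1)) (X, Y) (Pi.single k' 1, 0) :=
    pdx_pdy_eq hΩo hQ2 hp k' (Sum.inr β)
  rw [h0]
  have hev : (fun q => fderiv ℝ (tpQ F₁ F₂ f) q
        ((0 : (Fin n₁ ⊕ Fin n₂) → ℝ), Pi.single (Sum.inr β) 1)) =ᶠ[nhds ((X, Y) : ((Fin n₁ ⊕ Fin n₂) → ℝ) × ((Fin n₁ ⊕ Fin n₂) → ℝ))]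
      (fun q => f (tpinl q.1) (tpinr q.1) * f (tpinl q.1) (tpinr q.1)
        * fderiv ℝ (fun q' : (Fin n₂→ℝ)×(Fin n₂→ℝ) => (F₂ q'.1 q'.2)^2)
            (tpinr q.1, tpinr q.2) ((0 : Fin n₂→ℝ), Pi.single β 1)) := by
    filter_upwards [hΩo.mem_nhds hp] with q hq
    rw [tpDQ hF₁ hF₂ hf hq]
    simp [Prod.mk_zero_zero]
  rw [hev.fderiv_eq (𝕜 := ℝ)]
  have hbD : DifferentiableAt ℝ (fun q : (Fin n₁→ℝ)×(Fin n₂→ℝ) => f q.1 q.2)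
      ((tpinl X, tpinr X)) :=
    (hb.contDiffAt (hsb.mem_nhds (show (tpinl X, tpinr X) ∈ U₁ ×ˢ U₂
      from ⟨hp.1, hp.2.1⟩))).differentiableAt (by norm_num)
  have hΦd : DifferentiableAt ℝ
      (fun q : (Fin n₂→ℝ)×(Fin n₂→ℝ) =>
        fderiv ℝ (fun q' : (Fin n₂→ℝ)×(Fin n₂→ℝ) => (F₂ q'.1 q'.2)^2) q
          ((0 : Fin n₂→ℝ), Pi.single β 1)) (tpinr X, tpinr Y) := by
    have h1 : ContDiffAt ℝ 1
        (fderiv ℝ (fun q' : (Fin n₂→ℝ)×(Fin n₂→ℝ) => (F₂ q'.1 q'.2)^2)) (tpinr X, tpinr Y) :=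
      (hc.contDiffAt (hsc.mem_nhds
        (show (tpinr X, tpinr Y) ∈ U₂ ×ˢ {y : Fin n₂ → ℝ | y ≠ 0}
          from ⟨hp.2.1, hp.2.2.2⟩))).fderiv_right (by norm_num)
    exact (h1.differentiableAt (by norm_num)).clm_apply (differentiableAt_const _)
  have h2 : HasFDerivAt (fun q => f (tpinl q.1) (tpinr q.1))
      ((fderiv ℝ (fun q : (Fin n₁→ℝ)×(Fin n₂→ℝ) => f q.1 q.2)
        (tpinl X, tpinr X)).comp tpTf) (X, Y) :=
    by have := hbD.hasFDerivAt.comp (X, Y) tpTf.hasFDerivAt; exact this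
  have h3 : HasFDerivAt
      (fun q => fderiv ℝ (fun q' : (Fin n₂→ℝ)×(Fin n₂→ℝ) => (F₂ q'.1 q'.2)^2)
        (tpinr q.1, tpinr q.2) ((0 : Fin n₂→ℝ), Pi.single β 1))
      ((fderiv ℝ (fun q : (Fin n₂→ℝ)×(Fin n₂→ℝ) =>
          fderiv ℝ (fun q' : (Fin n₂→ℝ)×(Fin n₂→ℝ) => (F₂ q'.1 q'.2)^2) q
            ((0 : Fin n₂→ℝ), Pi.single β 1)) (tpinr X, tpinr Y)).comp tpT2) (X, Y) :=
    by have := hΦd.hasFDerivAt.comp (X, Y) tpT2.hasFDerivAt; exact this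
  have h4 := (h2.mul h2).mul h3
  simp only [Pi.mul_def] at h4
  rw [h4.fderiv]
  simp only [ContinuousLinearMap.add_apply, ContinuousLinearMap.coe_comp',
    Function.comp_apply, ContinuousLinearMap.smul_apply, smul_eq_mul,
    tpT1_apply, tpT2_apply, tpTf_apply, map_zero]
  ring

theorem tp_pdx_formula {X Y : (Fin n₁ ⊕ Fin n₂) → ℝ}
    (hp : ((X, Y) : ((Fin n₁ ⊕ Fin n₂) → ℝ) × ((Fin n₁ ⊕ Fin n₂) → ℝ)) ∈ tpΩ U₁ U₂) (k' : Fin n₁ ⊕ Fin n₂) :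
    pdx k' (fun X' Y' => tpQ F₁ F₂ f (X', Y')) X Y
      = fderiv ℝ (fun q : (Fin n₁→ℝ)×(Fin n₁→ℝ) => (F₁ q.1 q.2)^2)
          (tpinl X, tpinl Y) (tpinl (Pi.single k' 1), (0 : Fin n₁→ℝ))
        + 2 * f (tpinl X) (tpinr X)
          * fderiv ℝ (fun q : (Fin n₁→ℝ)×(Fin n₂→ℝ) => f q.1 q.2)
              (tpinl X, tpinr X) (tpinl (Pi.single k' 1), tpinr (Pi.single k' 1))
          * (F₂ (tpinr X) (tpinr Y))^2
        + f (tpinl X) (tpinr X) * f (tpinl X) (tpinr X)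
          * fderiv ℝ (fun q : (Fin n₂→ℝ)×(Fin n₂→ℝ) => (F₂ q.1 q.2)^2)
              (tpinr X, tpinr Y) (tpinr (Pi.single k' 1), (0 : Fin n₂→ℝ)) := by
  have h0 : pdx k' (fun X' Y' => tpQ F₁ F₂ f (X', Y')) X Y
      = fderiv ℝ (tpQ F₁ F₂ f) (X, Y) (Pi.single k' 1, 0) :=
    pdx_eq (show DifferentiableAt ℝ
        (fun q : ((Fin n₁ ⊕ Fin n₂) → ℝ) × ((Fin n₁ ⊕ Fin n₂) → ℝ) => tpQ F₁ F₂ f (q.1, q.2))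
        (X, Y) from tpQ_diffAt hF₁ hF₂ hf hp) k'
  rw [h0, tpDQ hF₁ hF₂ hf hp]
  simp

theorem tp_iff_inl {x y : Fin n₁ → ℝ} {u v : Fin n₂ → ℝ}
    (hx : x ∈ U₁) (hu : u ∈ U₂) (hy : y ≠ 0) (hv : v ≠ 0) (l : Fin n₁) :
    ((∑ k, Sum.elim y v k *
        pdx k (pdy (Sum.inl l) (fun X' Y' => tpQ F₁ F₂ f (X', Y'))) (Sum.elim x u) (Sum.elim y v))
      = 2 * pdx (Sum.inl l) (fun X' Y' => tpQ F₁ F₂ f (X', Y')) (Sum.elim x u) (Sum.elim y v))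
    ↔ ((∑ k, y k * pdx k (pdy l (fun a b => (F₁ a b)^2)) x y)
        = 2 * pdx l (fun a b => (F₁ a b)^2) x y + 4 * f x u * pdx l f x u * (F₂ u v)^2) := by
  have hp : ((Sum.elim x u, Sum.elim y v) :
      ((Fin n₁ ⊕ Fin n₂) → ℝ) × ((Fin n₁ ⊕ Fin n₂) → ℝ)) ∈ tpΩ U₁ U₂ := ⟨hx, hu, hy, hv⟩
  have hsa : IsOpen (U₁ ×ˢ {y : Fin n₁ → ℝ | y ≠ 0}) := hF₁.isOpen.prod isOpen_ne
  have hsb : IsOpen (U₁ ×ˢ U₂) := hF₁.isOpen.prod hF₂.isOpen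
  have ha : ContDiffOn ℝ 2 (fun q : (Fin n₁→ℝ)×(Fin n₁→ℝ) => (F₁ q.1 q.2)^2)
      (U₁ ×ˢ {y | y ≠ 0}) := (hF₁.smooth.pow 2).of_le (WithTop.coe_le_coe.mpr le_top)
  have hb : ContDiffOn ℝ 2 (fun q : (Fin n₁→ℝ)×(Fin n₂→ℝ) => f q.1 q.2) (U₁ ×ˢ U₂) :=
    hf.of_le (WithTop.coe_le_coe.mpr le_top)
  have hmema : ((x, y) : (Fin n₁→ℝ)×(Fin n₁→ℝ)) ∈ U₁ ×ˢ {y : Fin n₁ → ℝ | y ≠ 0} := ⟨hx, hy⟩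
  have hmemb : ((x, u) : (Fin n₁→ℝ)×(Fin n₂→ℝ)) ∈ U₁ ×ˢ U₂ := ⟨hx, hu⟩
  have haD : DifferentiableAt ℝ (fun q : (Fin n₁→ℝ)×(Fin n₁→ℝ) => (F₁ q.1 q.2)^2) (x, y) :=
    (ha.contDiffAt (hsa.mem_nhds hmema)).differentiableAt (by norm_num)
  have hbD : DifferentiableAt ℝ (fun q : (Fin n₁→ℝ)×(Fin n₂→ℝ) => f q.1 q.2) (x, u) :=
    (hb.contDiffAt (hsb.mem_nhds hmemb)).differentiableAt (by norm_num)
  have e1 : (∑ k, Sum.elim y v k *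
        pdx k (pdy (Sum.inl l) (fun X' Y' => tpQ F₁ F₂ f (X', Y'))) (Sum.elim x u) (Sum.elim y v))
      = ∑ k : Fin n₁, y k * pdx k (pdy l (fun a b => (F₁ a b)^2)) x y := by
    rw [Fintype.sum_sum_type]
    have hs2 : (∑ α : Fin n₂, Sum.elim y v (Sum.inr α) *
        pdx (Sum.inr α) (pdy (Sum.inl l) (fun X' Y' => tpQ F₁ F₂ f (X', Y')))
          (Sum.elim x u) (Sum.elim y v)) = 0 := by
      refine Finset.sum_eq_zero ?_
      intro α _
      rw [tp_mixed_inl hF₁ hF₂ hf hp l (Sum.inr α)]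
      simp [Prod.mk_zero_zero]
    have hs1 : (∑ k : Fin n₁, Sum.elim y v (Sum.inl k) *
        pdx (Sum.inl k) (pdy (Sum.inl l) (fun X' Y' => tpQ F₁ F₂ f (X', Y')))
          (Sum.elim x u) (Sum.elim y v))
        = ∑ k : Fin n₁, y k * pdx k (pdy l (fun a b => (F₁ a b)^2)) x y := by
      refine Finset.sum_congr rfl ?_
      intro k _
      rw [tp_mixed_inl hF₁ hF₂ hf hp l (Sum.inl k), pdx_pdy_eq hsa ha hmema k l]
      simp
    rw [hs1, hs2, add_zero]
  have e2 : pdx (Sum.inl l) (fun X' Y' => tpQ F₁ F₂ f (X', Y')) (Sum.elim x u) (Sum.elim y v)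
      = pdx l (fun a b => (F₁ a b)^2) x y + 2 * f x u * pdx l f x u * (F₂ u v)^2 := by
    rw [tp_pdx_formula hF₁ hF₂ hf hp (Sum.inl l), pdx_eq haD l, pdx_eq hbD l]
    simp only [tpinl_elim, tpinr_elim, tpinl_single_inl, tpinr_single_inl,
      Prod.mk_zero_zero, map_zero]
    ring
  rw [e1, e2]
  constructor <;> intro h <;> linarith

theorem tp_iff_inr (hfpos : ∀ x ∈ U₁, ∀ u ∈ U₂, 0 < f x u)
    {x y : Fin n₁ → ℝ} {u v : Fin n₂ → ℝ}
    (hx : x ∈ U₁) (hu : u ∈ U₂) (hy : y ≠ 0) (hv : v ≠ 0) (β : Fin n₂) :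
    ((∑ k, Sum.elim y v k *
        pdx k (pdy (Sum.inr β) (fun X' Y' => tpQ F₁ F₂ f (X', Y'))) (Sum.elim x u) (Sum.elim y v))
      = 2 * pdx (Sum.inr β) (fun X' Y' => tpQ F₁ F₂ f (X', Y')) (Sum.elim x u) (Sum.elim y v))
    ↔ (4 * (∑ k, pdx k f x u * y k) * lowerY F₂ β u v
        + f x u * (∑ α, v α * pdx α (pdy β (fun a b => (F₂ a b)^2)) u v)
        + 4 * (∑ α, pdy α f x u * v α) * lowerY F₂ β u v
      = 2 * f x u * pdx β (fun a b => (F₂ a b)^2) u v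
        + 4 * pdy β f x u * (F₂ u v)^2) := by
  have hp : ((Sum.elim x u, Sum.elim y v) :
      ((Fin n₁ ⊕ Fin n₂) → ℝ) × ((Fin n₁ ⊕ Fin n₂) → ℝ)) ∈ tpΩ U₁ U₂ := ⟨hx, hu, hy, hv⟩
  have hsc : IsOpen (U₂ ×ˢ {y : Fin n₂ → ℝ | y ≠ 0}) := hF₂.isOpen.prod isOpen_ne
  have hsb : IsOpen (U₁ ×ˢ U₂) := hF₁.isOpen.prod hF₂.isOpen
  have hc : ContDiffOn ℝ 2 (fun q : (Fin n₂→ℝ)×(Fin n₂→ℝ) => (F₂ q.1 q.2)^2)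
      (U₂ ×ˢ {y | y ≠ 0}) := (hF₂.smooth.pow 2).of_le (WithTop.coe_le_coe.mpr le_top)
  have hb : ContDiffOn ℝ 2 (fun q : (Fin n₁→ℝ)×(Fin n₂→ℝ) => f q.1 q.2) (U₁ ×ˢ U₂) :=
    hf.of_le (WithTop.coe_le_coe.mpr le_top)
  have hmemc : ((u, v) : (Fin n₂→ℝ)×(Fin n₂→ℝ)) ∈ U₂ ×ˢ {y : Fin n₂ → ℝ | y ≠ 0} := ⟨hu, hv⟩
  have hmemb : ((x, u) : (Fin n₁→ℝ)×(Fin n₂→ℝ)) ∈ U₁ ×ˢ U₂ := ⟨hx, hu⟩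
  have hcD : DifferentiableAt ℝ (fun q : (Fin n₂→ℝ)×(Fin n₂→ℝ) => (F₂ q.1 q.2)^2) (u, v) :=
    (hc.contDiffAt (hsc.mem_nhds hmemc)).differentiableAt (by norm_num)
  have hbD : DifferentiableAt ℝ (fun q : (Fin n₁→ℝ)×(Fin n₂→ℝ) => f q.1 q.2) (x, u) :=
    (hb.contDiffAt (hsb.mem_nhds hmemb)).differentiableAt (by norm_num)
  have hC : fderiv ℝ (fun q : (Fin n₂→ℝ)×(Fin n₂→ℝ) => (F₂ q.1 q.2)^2) (u, v)
      ((0 : Fin n₂→ℝ), Pi.single β 1) = 2 * lowerY F₂ β u v := by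
    rw [← pdy_eq (φ := fun a b => (F₂ a b)^2) hcD β]
    exact euler_pdy hF₂ hu hv β
  have hT1 : (∑ k : Fin n₁, Sum.elim y v (Sum.inl k) *
      pdx (Sum.inl k) (pdy (Sum.inr β) (fun X' Y' => tpQ F₁ F₂ f (X', Y')))
        (Sum.elim x u) (Sum.elim y v))
      = 4 * f x u * lowerY F₂ β u v * ∑ k, pdx k f x u * y k := by
    rw [Finset.mul_sum]
    refine Finset.sum_congr rfl ?_
    intro k _
    rw [tp_mixed_inr hF₁ hF₂ hf hp β (Sum.inl k)]
    simp only [tpinl_elim, tpinr_elim, tpinl_single_inl, tpinr_single_inl,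
      Prod.mk_zero_zero, map_zero, Sum.elim_inl]
    rw [hC, ← pdx_eq (φ := f) hbD k]
    ring
  have hT2 : (∑ α : Fin n₂, Sum.elim y v (Sum.inr α) *
      pdx (Sum.inr α) (pdy (Sum.inr β) (fun X' Y' => tpQ F₁ F₂ f (X', Y')))
        (Sum.elim x u) (Sum.elim y v))
      = 4 * f x u * lowerY F₂ β u v * (∑ α, pdy α f x u * v α)
        + f x u * f x u * (∑ α, v α * pdx α (pdy β (fun a b => (F₂ a b)^2)) u v) := by
    have hterm : ∀ α ∈ Finset.univ, Sum.elim y v (Sum.inr α) *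
        pdx (Sum.inr α) (pdy (Sum.inr β) (fun X' Y' => tpQ F₁ F₂ f (X', Y')))
          (Sum.elim x u) (Sum.elim y v)
        = 4 * f x u * lowerY F₂ β u v * (pdy α f x u * v α)
          + f x u * f x u * (v α * pdx α (pdy β (fun a b => (F₂ a b)^2)) u v) := by
      intro α _
      rw [tp_mixed_inr hF₁ hF₂ hf hp β (Sum.inr α)]
      simp only [tpinl_elim, tpinr_elim, tpinl_single_inr, tpinr_single_inr,
        Prod.mk_zero_zero, map_zero, Sum.elim_inr]
      rw [hC, ← pdy_eq (φ := f) hbD α,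
        ← pdx_pdy_eq (φ := fun a b => (F₂ a b)^2) hsc hc hmemc α β]
      ring
    rw [Finset.sum_congr rfl hterm, Finset.sum_add_distrib, ← Finset.mul_sum, ← Finset.mul_sum]
  have hRHS : pdx (Sum.inr β) (fun X' Y' => tpQ F₁ F₂ f (X', Y')) (Sum.elim x u) (Sum.elim y v)
      = 2 * f x u * pdy β f x u * (F₂ u v)^2
        + f x u * f x u * pdx β (fun a b => (F₂ a b)^2) u v := by
    rw [tp_pdx_formula hF₁ hF₂ hf hp (Sum.inr β)]
    simp only [tpinl_elim, tpinr_elim, tpinl_single_inr, tpinr_single_inr,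
      Prod.mk_zero_zero, map_zero]
    rw [← pdy_eq (φ := f) hbD β, ← pdx_eq (φ := fun a b => (F₂ a b)^2) hcD β]
    ring
  rw [Fintype.sum_sum_type, hT1, hT2, hRHS]
  have hfv : f x u ≠ 0 := ne_of_gt (hfpos x hx u hu)
  constructor
  · intro h
    apply mul_left_cancel₀ hfv
    linear_combination h
  · intro h
    linear_combination f x u * h

end

end Twist

theorem stmt_18 {n₁ n₂ : ℕ} {U₁ : Set (Fin n₁ → ℝ)} {U₂ : Set (Fin n₂ → ℝ)}
    {F₁ : (Fin n₁ → ℝ) → (Fin n₁ → ℝ) → ℝ}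
    {F₂ : (Fin n₂ → ℝ) → (Fin n₂ → ℝ) → ℝ}
    {f : (Fin n₁ → ℝ) → (Fin n₂ → ℝ) → ℝ}
    (hF₁ : IsFinslerMetric U₁ F₁) (hF₂ : IsFinslerMetric U₂ F₂)
    (hf : ContDiffOn ℝ (⊤ : ℕ∞) (fun p : (Fin n₁ → ℝ) × (Fin n₂ → ℝ) => f p.1 p.2) (U₁ ×ˢ U₂))
    (hfpos : ∀ x ∈ U₁, ∀ u ∈ U₂, 0 < f x u)
 :
    (∀ x ∈ U₁, ∀ u ∈ U₂, ∀ (y : Fin n₁ → ℝ) (v : Fin n₂ → ℝ), y ≠ 0 → v ≠ 0 →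
      ∀ l : Fin n₁ ⊕ Fin n₂,
        (∑ k, Sum.elim y v k *
            pdx k (pdy l (fun a b => (twisted F₁ F₂ f a b)^2)) (Sum.elim x u) (Sum.elim y v))
          = 2 * pdx l (fun a b => (twisted F₁ F₂ f a b)^2) (Sum.elim x u) (Sum.elim y v))
    ↔ ((∀ x ∈ U₁, ∀ u ∈ U₂, ∀ (y : Fin n₁ → ℝ) (v : Fin n₂ → ℝ), y ≠ 0 → v ≠ 0 →
        ∀ l : Fin n₁,
          (∑ k, y k * pdx k (pdy l (fun a b => (F₁ a b)^2)) x y)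
            = 2 * pdx l (fun a b => (F₁ a b)^2) x y
              + 4 * f x u * pdx l f x u * (F₂ u v)^2)
      ∧ (∀ x ∈ U₁, ∀ u ∈ U₂, ∀ (y : Fin n₁ → ℝ) (v : Fin n₂ → ℝ), y ≠ 0 → v ≠ 0 →
        ∀ β : Fin n₂,
          4 * (∑ k, pdx k f x u * y k) * lowerY F₂ β u v
            + f x u * (∑ α, v α * pdx α (pdy β (fun a b => (F₂ a b)^2)) u v)
            + 4 * (∑ α, pdy α f x u * v α) * lowerY F₂ β u v
          = 2 * f x u * pdx β (fun a b => (F₂ a b)^2) u v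
            + 4 * pdy β f x u * (F₂ u v)^2)) := by
  have htwist : (fun a b => (twisted F₁ F₂ f a b)^2)
      = (fun X' Y' => tpQ F₁ F₂ f (X', Y')) := by
    funext X Y
    show (Real.sqrt ((F₁ (X ∘ Sum.inl) (Y ∘ Sum.inl))^2
        + (f (X ∘ Sum.inl) (X ∘ Sum.inr))^2 * (F₂ (X ∘ Sum.inr) (Y ∘ Sum.inr))^2))^2
      = tpQ F₁ F₂ f (X, Y)
    rw [Real.sq_sqrt (by positivity)]
    show _ = (F₁ (X ∘ Sum.inl) (Y ∘ Sum.inl))^2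
      + (f (X ∘ Sum.inl) (X ∘ Sum.inr) * f (X ∘ Sum.inl) (X ∘ Sum.inr))
        * (F₂ (X ∘ Sum.inr) (Y ∘ Sum.inr))^2
    ring
  simp only [htwist]
  constructor
  · intro H
    refine ⟨?_, ?_⟩
    · intro x hx u hu y v hy hv l
      exact (tp_iff_inl hF₁ hF₂ hf hx hu hy hv l).mp (H x hx u hu y v hy hv (Sum.inl l))
    · intro x hx u hu y v hy hv β
      exact (tp_iff_inr hF₁ hF₂ hf hfpos hx hu hy hv β).mp (H x hx u hu y v hy hv (Sum.inr β))
  · rintro ⟨H1, H2⟩ x hx u hu y v hy hv l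
    cases l with
    | inl l => exact (tp_iff_inl hF₁ hF₂ hf hx hu hy hv l).mpr (H1 x hx u hu y v hy hv l)
    | inr β => exact (tp_iff_inr hF₁ hF₂ hf hfpos hx hu hy hv β).mpr (H2 x hx u hu y v hy hv β)
end
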